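/- arXiv:1810.11005 — 11 statements merged into one kernel-verified Lean document; each statement's English description precedes it below -/
import Mathlib

section
/- Let (h_n) be a regular sequence of functions on [0,1] and let h : [0,1] → ℝ be continuous and satisfy ∑_{n=0}^∞ ∫₀¹ h_n < ∫₀¹ h (the series on the left converges since ∫₀¹ h_n < 2^{-n}). Then there exists a point ξ ∈ [0,1] such that the series ∑_{n=0}^∞ h_n(ξ) converges and its sum is strictly less than h(ξ). -/
open MeasureTheory Filter Set

noncomputable section

/-- A sequence of functions on `[0,1]` is *regular* if each member is continuous and
nonnegative on `[0,1]` and has integral over `[0,1]` strictly less than `2⁻ⁿ`. -/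
def RegularSeq (h : ℕ → ℝ → ℝ) : Prop :=
  ∀ n : ℕ, ContinuousOn (h n) (Set.Icc 0 1) ∧
    (∀ x ∈ Set.Icc (0:ℝ) 1, 0 ≤ h n x) ∧
    (∫ x in (0:ℝ)..1, h n x) < (1/2 : ℝ) ^ n

/-- The set `Ω(𝔥)` of points of `[0,1]` at which the partial sums of `∑ hₙ(x)` are
bounded above. -/
def Omega (h : ℕ → ℝ → ℝ) : Set ℝ :=
  {x ∈ Set.Icc (0:ℝ) 1 | ∃ γ : ℝ, ∀ m : ℕ, ∑ n ∈ Finset.range (m+1), h n x ≤ γ}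

/-- A subset `X ⊆ [0,1]` is *almost full* if `Ω(𝔥) ⊆ X` for some regular sequence `𝔥`. -/
def AlmostFull (X : Set ℝ) : Prop :=
  ∃ h : ℕ → ℝ → ℝ, RegularSeq h ∧ Omega h ⊆ X

/-! Suppose, to the contrary, that `h(ξ) ≤ ∑ hₙ(ξ)` wherever the series converges. Where it
diverges, the sum computed in `[0, ∞]` is `∞`, so `h ≤ ∑ hₙ` holds on all of `[0,1]` in
`[0, ∞]`. Integrating and exchanging sum and integral by monotone convergence gives
`∫₀¹ h ≤ ∑ ∫₀¹ hₙ`, contradicting the hypothesis. -/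

theorem ENNReal.ofReal_le_tsum_ofReal {ι : Type*} {u : ι → ℝ} (hu : ∀ i, 0 ≤ u i) {c : ℝ}
    (hc : Summable u → c ≤ ∑' i, u i) : ENNReal.ofReal c ≤ ∑' i, ENNReal.ofReal (u i) := by
  by_cases hs : Summable u
  · rw [← ENNReal.ofReal_tsum_of_nonneg hu hs]
    exact ENNReal.ofReal_le_ofReal (hc hs)
  · suffices h : ∑' i, ENNReal.ofReal (u i) = ⊤ by simp [h]
    by_contra htop
    exact hs <| (ENNReal.summable_toReal htop).congr fun i => ENNReal.toReal_ofReal (hu i)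

theorem MeasureTheory.ofReal_integral_le_lintegral_ofReal {α : Type*} [MeasurableSpace α]
    {μ : Measure α} (g : α → ℝ) : ENNReal.ofReal (∫ x, g x ∂μ) ≤ ∫⁻ x, ENNReal.ofReal (g x) ∂μ := by
  by_cases hg : Integrable g μ
  · refine ENNReal.ofReal_le_of_le_toReal ?_
    rw [integral_eq_lintegral_pos_part_sub_lintegral_neg_part hg]
    exact sub_le_self _ ENNReal.toReal_nonneg
  · simp [integral_undef hg]

theorem MeasureTheory.integral_le_tsum_integral_of_ae_le_tsum {α : Type*} [MeasurableSpace α]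
    {μ : Measure α} {f : ℕ → α → ℝ} (hf : ∀ n, Integrable (f n) μ) (hf0 : ∀ n, 0 ≤ᵐ[μ] f n)
    (hsum : Summable fun n => ∫ x, f n x ∂μ) (g : α → ℝ)
    (hle : ∀ᵐ x ∂μ, Summable (fun n => f n x) → g x ≤ ∑' n, f n x) :
    ∫ x, g x ∂μ ≤ ∑' n, ∫ x, f n x ∂μ := by
  have hint0 : ∀ n, 0 ≤ ∫ x, f n x ∂μ := fun n => integral_nonneg_of_ae (hf0 n)
  have hle' : ∀ᵐ x ∂μ, ENNReal.ofReal (g x) ≤ ∑' n, ENNReal.ofReal (f n x) := by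
    filter_upwards [hle, ae_all_iff.2 hf0] with x hx hx0
    exact ENNReal.ofReal_le_tsum_ofReal hx0 hx
  refine (ENNReal.ofReal_le_ofReal_iff (tsum_nonneg hint0)).1 ?_
  calc ENNReal.ofReal (∫ x, g x ∂μ)
      ≤ ∫⁻ x, ENNReal.ofReal (g x) ∂μ := ofReal_integral_le_lintegral_ofReal g
    _ ≤ ∫⁻ x, ∑' n, ENNReal.ofReal (f n x) ∂μ := lintegral_mono_ae hle'
    _ = ∑' n, ∫⁻ x, ENNReal.ofReal (f n x) ∂μ :=
        lintegral_tsum fun n => (hf n).aemeasurable.ennreal_ofReal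
    _ = ∑' n, ENNReal.ofReal (∫ x, f n x ∂μ) :=
        tsum_congr fun n => (ofReal_integral_eq_lintegral_ofReal (hf n) (hf0 n)).symm
    _ = ENNReal.ofReal (∑' n, ∫ x, f n x ∂μ) := (ENNReal.ofReal_tsum_of_nonneg hint0 hsum).symm

theorem intervalIntegral.integral_eq_setIntegral_Icc {f : ℝ → ℝ} {a b : ℝ} (hab : a ≤ b) :
    ∫ x in a..b, f x = ∫ x in Icc a b, f x := by
  rw [intervalIntegral.integral_of_le hab, integral_Icc_eq_integral_Ioc]

theorem RegularSeq.summable_integral {hseq : ℕ → ℝ → ℝ} (hreg : RegularSeq hseq) :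
    Summable fun n => ∫ x in (0:ℝ)..1, hseq n x :=
  Summable.of_nonneg_of_le
    (fun n => intervalIntegral.integral_nonneg zero_le_one (hreg n).2.1)
    (fun n => (hreg n).2.2.le) (summable_geometric_of_lt_one (by norm_num) (by norm_num))

theorem stmt0_general (hseq : ℕ → ℝ → ℝ) (hreg : RegularSeq hseq)
    (h : ℝ → ℝ)
    (hlt : (∑' n : ℕ, ∫ x in (0:ℝ)..1, hseq n x) < ∫ x in (0:ℝ)..1, h x) :
    ∃ ξ ∈ Set.Icc (0:ℝ) 1,
      Summable (fun n => hseq n ξ) ∧ (∑' n : ℕ, hseq n ξ) < h ξ := by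
  by_contra! hcon
  have hsum := hreg.summable_integral
  simp only [intervalIntegral.integral_eq_setIntegral_Icc zero_le_one] at hlt hsum
  refine hlt.not_ge <| integral_le_tsum_integral_of_ae_le_tsum
    (fun n => (hreg n).1.integrableOn_Icc)
    (fun n => (ae_restrict_iff' measurableSet_Icc).2 (ae_of_all _ (hreg n).2.1)) hsum h
    ((ae_restrict_iff' measurableSet_Icc).2 (ae_of_all _ hcon))

/-- If `(hₙ)` is regular, `h` is continuous on `[0,1]`, and `∑ₙ ∫₀¹ hₙ < ∫₀¹ h`, then at
some point `ξ ∈ [0,1]` the series `∑ₙ hₙ(ξ)` converges to a sum strictly less than `h(ξ)`. -/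
theorem stmt0 (hseq : ℕ → ℝ → ℝ) (hreg : RegularSeq hseq)
    (h : ℝ → ℝ) (hcont : ContinuousOn h (Set.Icc 0 1))
    (hlt : (∑' n : ℕ, ∫ x in (0:ℝ)..1, hseq n x) < ∫ x in (0:ℝ)..1, h x) :
    ∃ ξ ∈ Set.Icc (0:ℝ) 1,
      Summable (fun n => hseq n ξ) ∧ (∑' n : ℕ, hseq n ξ) < h ξ :=
  stmt0_general hseq hreg h hlt
end
end

section
/- Let (h_n) be a regular sequence of functions on [0,1] and let h : [0,1] → ℝ be continuous and satisfy ∑_{n=0}^∞ ∫₀¹ h_n < ∫₀¹ h. Then there exist ε ∈ (0,1) and a point ξ ∈ [0,1] such that for every m ∈ ℕ one has ∑_{n=0}^m (1+ε)^n·h_n(ξ) ≤ h(ξ) − ε. -/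
open MeasureTheory Filter Set

noncomputable section

/-! Since `∫₀¹ hₙ < 2⁻ⁿ`, the series `∑ (1+ε)ⁿ ∫₀¹ hₙ` is continuous in `ε` at `0` (dominated
convergence), so for small `ε > 0` it stays below `∫₀¹ h - ε`. Integrating the partial sums then
shows that each closed set `Kₘ = {x ∈ [0,1] | ∑_{n≤m} (1+ε)ⁿ hₙ(x) ≤ h(x) - ε}` is nonempty; the
`Kₘ` decrease because `hₙ ≥ 0`, so by compactness of `[0,1]` they share a point `ξ`. -/

open scoped Topology

theorem exists_mem_Icc_lt_of_integral_lt {f g : ℝ → ℝ} {a b : ℝ} (hab : a ≤ b)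
    (hf : IntervalIntegrable f volume a b) (hg : IntervalIntegrable g volume a b)
    (hlt : ∫ x in a..b, f x < ∫ x in a..b, g x) : ∃ x ∈ Icc a b, f x < g x := by
  by_contra! hge
  exact (intervalIntegral.integral_mono_on hab hg hf hge).not_gt hlt

theorem IsCompact.exists_forall_le_of_forall_exists_le {X : Type*} [TopologicalSpace X]
    [T2Space X] {K : Set X} (hK : IsCompact K) {F : ℕ → X → ℝ} {g : X → ℝ}
    (hF : ∀ m, ContinuousOn (F m) K) (hg : ContinuousOn g K)
    (hmono : ∀ m, ∀ x ∈ K, F m x ≤ F (m + 1) x) (hex : ∀ m, ∃ x ∈ K, F m x ≤ g x) :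
    ∃ ξ ∈ K, ∀ m, F m ξ ≤ g ξ := by
  set t : ℕ → Set X := fun m => K ∩ (F m - g) ⁻¹' Iic 0
  have mem_t {m : ℕ} {x : X} : x ∈ t m ↔ x ∈ K ∧ F m x ≤ g x := by simp [t]
  have ht_closed (m : ℕ) : IsClosed (t m) :=
    ((hF m).sub hg).preimage_isClosed_of_isClosed hK.isClosed isClosed_Iic
  have ht_anti (m : ℕ) : t (m + 1) ⊆ t m := fun x hx => by
    rw [mem_t] at hx ⊢
    exact ⟨hx.1, (hmono m x hx.1).trans hx.2⟩
  have ht_nonempty (m : ℕ) : (t m).Nonempty := by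
    obtain ⟨x, hxK, hx⟩ := hex m
    exact ⟨x, mem_t.2 ⟨hxK, hx⟩⟩
  obtain ⟨ξ, hξ⟩ := IsCompact.nonempty_iInter_of_sequence_nonempty_isCompact_isClosed t ht_anti
    ht_nonempty (hK.of_isClosed_subset (ht_closed 0) inter_subset_left) ht_closed
  rw [mem_iInter] at hξ
  exact ⟨ξ, (mem_t.1 (hξ 0)).1, fun m => (mem_t.1 (hξ m)).2⟩

theorem summable_pow_mul_of_abs_le_pow {I : ℕ → ℝ} {r q : ℝ} (hI : ∀ n, |I n| ≤ r ^ n)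
    (hqr : |q| * r < 1) : Summable fun n => q ^ n * I n := by
  have hr : 0 ≤ r := by simpa using (abs_nonneg _).trans (hI 1)
  refine Summable.of_norm_bounded (summable_geometric_of_lt_one (by positivity) hqr) fun n => ?_
  rw [Real.norm_eq_abs, abs_mul, abs_pow, mul_pow]
  exact mul_le_mul_of_nonneg_left (hI n) (by positivity)

theorem tendsto_tsum_pow_mul_nhds_one {I : ℕ → ℝ} {r : ℝ} (hI : ∀ n, |I n| ≤ r ^ n)
    (hr : r < 1) : Tendsto (fun q => ∑' n, q ^ n * I n) (𝓝 1) (𝓝 (∑' n, I n)) := by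
  obtain ⟨s, hrs, hs1⟩ := exists_between hr
  have hr0 : 0 ≤ r := by simpa using (abs_nonneg _).trans (hI 1)
  have hnear : ∀ᶠ q : ℝ in 𝓝 1, |q| * r < s :=
    Tendsto.eventually_lt_const hrs (by simpa using (continuous_abs.tendsto 1).mul_const r)
  refine tendsto_tsum_of_dominated_convergence (bound := fun n => s ^ n)
    (summable_geometric_of_lt_one (by linarith) hs1) (fun n => ?_) ?_
  · simpa using ((continuous_pow n).tendsto 1).mul_const (I n)
  · filter_upwards [hnear] with q hq n
    rw [Real.norm_eq_abs, abs_mul, abs_pow]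
    calc |q| ^ n * |I n| ≤ |q| ^ n * r ^ n := by gcongr; exact hI n
      _ = (|q| * r) ^ n := (mul_pow _ _ _).symm
      _ ≤ s ^ n := by gcongr

namespace RegularSeq

variable {hseq : ℕ → ℝ → ℝ}

theorem intervalIntegrable (hreg : RegularSeq hseq) (n : ℕ) :
    IntervalIntegrable (hseq n) volume 0 1 :=
  (hreg n).1.intervalIntegrable_of_Icc zero_le_one

theorem integral_nonneg (hreg : RegularSeq hseq) (n : ℕ) : 0 ≤ ∫ x in (0:ℝ)..1, hseq n x :=
  intervalIntegral.integral_nonneg zero_le_one (hreg n).2.1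

theorem abs_integral_le (hreg : RegularSeq hseq) (n : ℕ) :
    |∫ x in (0:ℝ)..1, hseq n x| ≤ (1/2 : ℝ) ^ n := by
  rw [abs_of_nonneg (hreg.integral_nonneg n)]
  exact (hreg n).2.2.le

theorem exists_tsum_pow_mul_integral_lt_sub (hreg : RegularSeq hseq) {D : ℝ}
    (hD : ∑' n, ∫ x in (0:ℝ)..1, hseq n x < D) :
    ∃ ε ∈ Ioo (0:ℝ) 1, ∑' n, (1 + ε) ^ n * ∫ x in (0:ℝ)..1, hseq n x < D - ε := by
  have hlim : Tendsto (fun ε => (∑' n, (1 + ε) ^ n * ∫ x in (0:ℝ)..1, hseq n x) + ε) (𝓝[>] 0)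
      (𝓝 (∑' n, ∫ x in (0:ℝ)..1, hseq n x)) := by
    have hq : Tendsto (fun ε : ℝ => 1 + ε) (𝓝[>] 0) (𝓝 1) :=
      tendsto_nhdsWithin_of_tendsto_nhds (by simpa using (continuous_const_add (1:ℝ)).tendsto 0)
    simpa using ((tendsto_tsum_pow_mul_nhds_one hreg.abs_integral_le (by norm_num)).comp hq).add
      (tendsto_nhdsWithin_of_tendsto_nhds tendsto_id)
  obtain ⟨ε, hlt, hε⟩ := ((hlim.eventually_lt_const hD).and (Ioo_mem_nhdsGT zero_lt_one)).exists
  exact ⟨ε, hε, lt_sub_iff_add_lt.2 hlt⟩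

theorem continuousOn_sum_pow_mul (hreg : RegularSeq hseq) (q : ℝ) (s : Finset ℕ) :
    ContinuousOn (fun x => ∑ n ∈ s, q ^ n * hseq n x) (Icc 0 1) :=
  continuousOn_finsetSum s fun n _ => continuousOn_const.mul (hreg n).1

theorem sum_range_pow_mul_le_succ (hreg : RegularSeq hseq) {q : ℝ} (hq : 0 ≤ q) (m : ℕ)
    {x : ℝ} (hx : x ∈ Icc (0:ℝ) 1) :
    ∑ n ∈ Finset.range (m + 1), q ^ n * hseq n x ≤
      ∑ n ∈ Finset.range (m + 2), q ^ n * hseq n x := by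
  rw [Finset.sum_range_succ _ (m + 1)]
  exact le_add_of_nonneg_right (mul_nonneg (pow_nonneg hq _) ((hreg _).2.1 x hx))

theorem exists_sum_range_pow_mul_lt (hreg : RegularSeq hseq) {g : ℝ → ℝ}
    (hg : ContinuousOn g (Icc 0 1)) {q : ℝ} (hq0 : 0 ≤ q) (hq2 : q < 2)
    (hlt : ∑' n, q ^ n * ∫ x in (0:ℝ)..1, hseq n x < ∫ x in (0:ℝ)..1, g x) (m : ℕ) :
    ∃ x ∈ Icc (0:ℝ) 1, ∑ n ∈ Finset.range (m + 1), q ^ n * hseq n x < g x := by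
  refine exists_mem_Icc_lt_of_integral_lt zero_le_one
    ((hreg.continuousOn_sum_pow_mul q _).intervalIntegrable_of_Icc zero_le_one)
    (hg.intervalIntegrable_of_Icc zero_le_one) (lt_of_le_of_lt ?_ hlt)
  have hsummable : Summable fun n => q ^ n * ∫ x in (0:ℝ)..1, hseq n x :=
    summable_pow_mul_of_abs_le_pow hreg.abs_integral_le (by rw [abs_of_nonneg hq0]; linarith)
  rw [intervalIntegral.integral_finsetSum fun n _ => (hreg.intervalIntegrable n).const_mul _]
  simp only [intervalIntegral.integral_const_mul]
  exact hsummable.sum_le_tsum _ fun n _ => mul_nonneg (pow_nonneg hq0 n) (hreg.integral_nonneg n)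

end RegularSeq

/-- If `(hₙ)` is regular, `h` is continuous on `[0,1]`, and `∑ₙ ∫₀¹ hₙ < ∫₀¹ h`, then there
are `ε ∈ (0,1)` and `ξ ∈ [0,1]` with `∑_{n=0}^m (1+ε)ⁿ hₙ(ξ) ≤ h(ξ) - ε` for all `m`. -/
theorem stmt1 (hseq : ℕ → ℝ → ℝ) (hreg : RegularSeq hseq)
    (h : ℝ → ℝ) (hcont : ContinuousOn h (Set.Icc 0 1))
    (hlt : (∑' n : ℕ, ∫ x in (0:ℝ)..1, hseq n x) < ∫ x in (0:ℝ)..1, h x) :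
    ∃ ε ∈ Set.Ioo (0:ℝ) 1, ∃ ξ ∈ Set.Icc (0:ℝ) 1,
      ∀ m : ℕ, ∑ n ∈ Finset.range (m+1), (1+ε)^n * hseq n ξ ≤ h ξ - ε := by
  obtain ⟨ε, hε, hεlt⟩ := hreg.exists_tsum_pow_mul_integral_lt_sub hlt
  have hg : ContinuousOn (fun x => h x - ε) (Icc 0 1) := hcont.sub continuousOn_const
  have h_integral : ∫ x in (0:ℝ)..1, (h x - ε) = (∫ x in (0:ℝ)..1, h x) - ε := by
    simp [intervalIntegral.integral_sub (hcont.intervalIntegrable_of_Icc zero_le_one)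
      intervalIntegrable_const]
  have hq : 0 ≤ 1 + ε := by linarith [hε.1]
  refine ⟨ε, hε, isCompact_Icc.exists_forall_le_of_forall_exists_le
    (fun m => hreg.continuousOn_sum_pow_mul _ _) hg
    (fun m x hx => hreg.sum_range_pow_mul_le_succ hq m hx) fun m => ?_⟩
  obtain ⟨x, hx, hlt⟩ :=
    hreg.exists_sum_range_pow_mul_lt hg hq (by linarith [hε.2]) (h_integral ▸ hεlt) m
  exact ⟨x, hx, hlt.le⟩
end
end

section
/- Every almost full subset of [0,1] is nonempty; equivalently, for every regular sequence (h_n) of functions on [0,1] there exists a point x ∈ [0,1] at which the series ∑_{n=0}^∞ h_n(x) converges. -/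
open MeasureTheory Filter Set

noncomputable section

/-!
The series `∑ ‖hₙ‖` has `L¹([0,1])`-norm at most `∑ 2⁻ⁿ < ∞`, so `∑ hₙ(x)` converges for almost
every `x ∈ [0,1]`, and in particular for some `x`, since `[0,1]` has positive measure.
-/

lemma mem_Omega_of_summable {h : ℕ → ℝ → ℝ} {x : ℝ} (hx : x ∈ Icc (0:ℝ) 1)
    (hnonneg : ∀ n, 0 ≤ h n x) (hsum : Summable fun n => h n x) : x ∈ Omega h :=
  ⟨hx, ∑' n, h n x, fun _ => hsum.sum_le_tsum _ fun n _ => hnonneg n⟩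

namespace RegularSeq

variable {h : ℕ → ℝ → ℝ}

lemma eLpNorm_one_le (hh : RegularSeq h) (n : ℕ) :
    eLpNorm (h n) 1 (volume.restrict (Icc 0 1)) ≤ ENNReal.ofReal ((1 / 2) ^ n) := by
  obtain ⟨hcont, hnonneg, hint⟩ := hh n
  have hnorm : ∫ x in Icc (0:ℝ) 1, ‖h n x‖ = ∫ x in (0:ℝ)..1, h n x := by
    rw [intervalIntegral.integral_of_le zero_le_one, ← integral_Icc_eq_integral_Ioc]
    exact setIntegral_congr_fun measurableSet_Icc fun x hx => Real.norm_of_nonneg (hnonneg x hx)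
  rw [eLpNorm_one_eq_lintegral_enorm,
    ← ofReal_integral_norm_eq_lintegral_enorm hcont.integrableOn_Icc, hnorm]
  exact ENNReal.ofReal_le_ofReal hint.le

lemma ae_summable (hh : RegularSeq h) :
    ∀ᵐ x ∂volume.restrict (Icc 0 1), Summable fun n => h n x := by
  have hsum : ∑' n, eLpNorm (h n) 1 (volume.restrict (Icc 0 1)) ≠ ⊤ := by
    refine ne_top_of_le_ne_top ?_ (ENNReal.tsum_le_tsum hh.eLpNorm_one_le)
    rw [← ENNReal.ofReal_tsum_of_nonneg (fun n => by positivity) summable_geometric_two]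
    exact ENNReal.ofReal_ne_top
  filter_upwards [summable_norm_of_tsum_eLpNorm_ne_top le_rfl
    (fun n => (hh n).1.aestronglyMeasurable measurableSet_Icc) hsum] with x hx
  exact hx.of_norm

lemma exists_mem_Icc_summable (hh : RegularSeq h) :
    ∃ x ∈ Icc (0:ℝ) 1, Summable fun n => h n x :=
  Measure.exists_mem_of_measure_ne_zero_of_ae (by simp) hh.ae_summable

end RegularSeq

/-- Every almost full subset of `[0,1]` is nonempty; equivalently, for every regular
sequence there is a point where the series converges. -/
theorem stmt2 :
    (∀ X : Set ℝ, AlmostFull X → X.Nonempty) ∧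
    (∀ h : ℕ → ℝ → ℝ, RegularSeq h →
      ∃ x ∈ Set.Icc (0:ℝ) 1, Summable (fun n => h n x)) := by
  refine ⟨?_, fun h hh => hh.exists_mem_Icc_summable⟩
  rintro X ⟨h, hh, hX⟩
  obtain ⟨x, hx, hsum⟩ := hh.exists_mem_Icc_summable
  exact ⟨x, hX (mem_Omega_of_summable hx (fun n => (hh n).2.1 x hx) hsum)⟩
end
end

section
/- If X ⊆ [0,1] and Y ⊆ [0,1] are both almost full, then their intersection X ∩ Y is almost full. -/
open MeasureTheory Filter Set

noncomputable section

/-! Shifting two regular sequences by one index halves their integral bounds, so their sum is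
again regular; and since all terms are nonnegative, convergence of the summed series at `x`
forces convergence of each of the two original series at `x`. -/

lemma RegularSeq.intervalIntegrable_s3 {h : ℕ → ℝ → ℝ} (hh : RegularSeq h) (n : ℕ) :
    IntervalIntegrable (h n) volume 0 1 :=
  (hh n).1.intervalIntegrable_of_Icc zero_le_one

lemma RegularSeq.shift_add {h g : ℕ → ℝ → ℝ} (hh : RegularSeq h) (hg : RegularSeq g) :
    RegularSeq fun n x => h (n + 1) x + g (n + 1) x := by
  intro n
  obtain ⟨h_cont, h_nonneg, h_int⟩ := hh (n + 1)
  obtain ⟨g_cont, g_nonneg, g_int⟩ := hg (n + 1)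
  refine ⟨h_cont.add g_cont, fun x hx => add_nonneg (h_nonneg x hx) (g_nonneg x hx), ?_⟩
  calc (∫ x in (0:ℝ)..1, h (n + 1) x + g (n + 1) x)
      = (∫ x in (0:ℝ)..1, h (n + 1) x) + ∫ x in (0:ℝ)..1, g (n + 1) x :=
        intervalIntegral.integral_add (hh.intervalIntegrable_s3 _) (hg.intervalIntegrable_s3 _)
    _ < (1/2 : ℝ) ^ (n + 1) + (1/2 : ℝ) ^ (n + 1) := add_lt_add h_int g_int
    _ = (1/2 : ℝ) ^ n := by ring

lemma Omega_subset_of_le {h k : ℕ → ℝ → ℝ} (hle : ∀ n, ∀ x ∈ Icc (0:ℝ) 1, h n x ≤ k n x) :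
    Omega k ⊆ Omega h := by
  rintro x ⟨hx, γ, hγ⟩
  exact ⟨hx, γ, fun m => (Finset.sum_le_sum fun n _ => hle n x hx).trans (hγ m)⟩

lemma Omega_shift_subset {h : ℕ → ℝ → ℝ} (h_nonneg : ∀ n, ∀ x ∈ Icc (0:ℝ) 1, 0 ≤ h n x) :
    Omega (fun n => h (n + 1)) ⊆ Omega h := by
  rintro x ⟨hx, γ, hγ⟩
  refine ⟨hx, γ + h 0 x, fun m => ?_⟩
  have h_partial : ∑ n ∈ Finset.range m, h (n + 1) x ≤ γ := by
    refine le_trans ?_ (hγ m)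
    rw [Finset.sum_range_succ]
    exact le_add_of_nonneg_right (h_nonneg _ x hx)
  rw [Finset.sum_range_succ']
  gcongr

theorem stmt3_general (X Y : Set ℝ)
    (hX : AlmostFull X) (hY : AlmostFull Y) :
    AlmostFull (X ∩ Y) := by
  obtain ⟨h, hh, hX⟩ := hX
  obtain ⟨g, hg, hY⟩ := hY
  refine ⟨fun n x => h (n + 1) x + g (n + 1) x, hh.shift_add hg, subset_inter ?_ ?_⟩
  · refine (Omega_subset_of_le fun n x hx => ?_).trans
      ((Omega_shift_subset fun n => (hh n).2.1).trans hX)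
    exact le_add_of_nonneg_right ((hg (n + 1)).2.1 x hx)
  · refine (Omega_subset_of_le fun n x hx => ?_).trans
      ((Omega_shift_subset fun n => (hg n).2.1).trans hY)
    exact le_add_of_nonneg_left ((hh (n + 1)).2.1 x hx)

/-- The intersection of two almost full subsets of `[0,1]` is almost full. -/
theorem stmt3 (X Y : Set ℝ) (hX' : X ⊆ Set.Icc 0 1) (hY' : Y ⊆ Set.Icc 0 1)
    (hX : AlmostFull X) (hY : AlmostFull Y) :
    AlmostFull (X ∩ Y) :=
  stmt3_general X Y hX hY
end
end

section
/- If (X_n)_{n∈ℕ} is a sequence of almost full subsets of [0,1], then the countable intersection ⋂_{n∈ℕ} X_n is almost full. -/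
/-!
Given regular sequences `hᵢ` with `Ω(hᵢ) ⊆ Xᵢ`, put `gₖ := ∑_{i ≤ k} hᵢ,ₖ₊ᵢ₊₁`. Since
`∫ hᵢ,ₖ₊ᵢ₊₁ < 2^-(k+i+1)`, the integrals of `gₖ` stay below `2^-k`, so `g` is regular. Every
term `hᵢ,ⱼ` with `j > 2i` occurs in some `gₖ`, so for nonnegative terms convergence of `∑ gₖ(x)`
forces convergence of each `∑ⱼ hᵢ,ⱼ(x)`, i.e. `Ω(g) ⊆ ⋂ᵢ Ω(hᵢ) ⊆ ⋂ᵢ Xᵢ`.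
-/

open MeasureTheory Filter Set

noncomputable section

lemma exists_forall_sum_range_succ_le_iff_summable {f : ℕ → ℝ} (hf : ∀ n, 0 ≤ f n) :
    (∃ γ, ∀ m, ∑ n ∈ Finset.range (m + 1), f n ≤ γ) ↔ Summable f := by
  constructor
  · rintro ⟨γ, hγ⟩
    refine summable_of_sum_range_le (c := γ) hf fun m => ?_
    calc ∑ n ∈ Finset.range m, f n ≤ ∑ n ∈ Finset.range (m + 1), f n := by
          rw [Finset.sum_range_succ]; linarith [hf m]
      _ ≤ γ := hγ m
  · exact fun hs => ⟨∑' n, f n, fun m => hs.sum_le_tsum _ fun n _ => hf n⟩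

lemma RegularSeq.nonneg {h : ℕ → ℝ → ℝ} (hh : RegularSeq h) (n : ℕ) {x : ℝ}
    (hx : x ∈ Icc (0 : ℝ) 1) : 0 ≤ h n x :=
  (hh n).2.1 x hx

lemma RegularSeq.mem_omega_iff {h : ℕ → ℝ → ℝ} (hh : RegularSeq h) {x : ℝ} :
    x ∈ Omega h ↔ x ∈ Icc (0 : ℝ) 1 ∧ Summable fun n => h n x :=
  and_congr_right fun hx =>
    exists_forall_sum_range_succ_le_iff_summable fun n => hh.nonneg n hx

lemma sum_range_pow_half_le (k : ℕ) :
    ∑ i ∈ Finset.range (k + 1), (1 / 2 : ℝ) ^ (k + i + 1) ≤ (1 / 2) ^ k :=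
  calc ∑ i ∈ Finset.range (k + 1), (1 / 2 : ℝ) ^ (k + i + 1)
      = (1 / 2) ^ k * (1 / 2) * ∑ i ∈ Finset.range (k + 1), (1 / 2 : ℝ) ^ i := by
        rw [Finset.mul_sum]; exact Finset.sum_congr rfl fun i _ => by ring
    _ ≤ (1 / 2) ^ k * (1 / 2) * 2 := by gcongr; exact sum_geometric_two_le _
    _ = (1 / 2) ^ k := by ring

def diagSum (h : ℕ → ℕ → ℝ → ℝ) (k : ℕ) (x : ℝ) : ℝ :=
  ∑ i ∈ Finset.range (k + 1), h i (k + i + 1) x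

lemma regularSeq_diagSum {h : ℕ → ℕ → ℝ → ℝ} (hh : ∀ i, RegularSeq (h i)) :
    RegularSeq (diagSum h) := by
  intro k
  have hcont : ∀ i ∈ Finset.range (k + 1), ContinuousOn (h i (k + i + 1)) (Icc 0 1) :=
    fun i _ => (hh i (k + i + 1)).1
  refine ⟨continuousOn_finsetSum _ hcont,
    fun x hx => Finset.sum_nonneg fun i _ => (hh i).nonneg _ hx, ?_⟩
  calc ∫ x in (0 : ℝ)..1, diagSum h k x
      = ∑ i ∈ Finset.range (k + 1), ∫ x in (0 : ℝ)..1, h i (k + i + 1) x :=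
        intervalIntegral.integral_finsetSum fun i hi =>
          (hcont i hi).intervalIntegrable_of_Icc zero_le_one
    _ < ∑ i ∈ Finset.range (k + 1), (1 / 2 : ℝ) ^ (k + i + 1) :=
        Finset.sum_lt_sum_of_nonempty Finset.nonempty_range_add_one fun i _ =>
          (hh i (k + i + 1)).2.2
    _ ≤ (1 / 2) ^ k := sum_range_pow_half_le k

lemma omega_diagSum_subset {h : ℕ → ℕ → ℝ → ℝ} (hh : ∀ i, RegularSeq (h i)) (i : ℕ) :
    Omega (diagSum h) ⊆ Omega (h i) := by
  intro x hx
  rw [(regularSeq_diagSum hh).mem_omega_iff] at hx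
  rw [(hh i).mem_omega_iff]
  refine ⟨hx.1, (summable_nat_add_iff (2 * i + 1)).1 ?_⟩
  refine ((summable_nat_add_iff i).2 hx.2).of_nonneg_of_le
    (fun j => (hh i).nonneg _ hx.1) fun j => ?_
  have hterm : h i (j + (2 * i + 1)) x = h i (j + i + i + 1) x := by congr 1; omega
  rw [hterm]
  exact Finset.single_le_sum (f := fun i' => h i' (j + i + i' + 1) x)
    (fun i' _ => (hh i').nonneg _ hx.1) (Finset.mem_range.2 (by omega))

theorem stmt4_general (X : ℕ → Set ℝ)
    (hX : ∀ n, AlmostFull (X n)) :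
    AlmostFull (⋂ n, X n) := by
  choose h hh hsub using hX
  exact ⟨diagSum h, regularSeq_diagSum hh, fun x hx =>
    mem_iInter.2 fun i => hsub i (omega_diagSum_subset hh i hx)⟩

/-- The intersection of a sequence of almost full subsets of `[0,1]` is almost full. -/
theorem stmt4 (X : ℕ → Set ℝ) (hX' : ∀ n, X n ⊆ Set.Icc 0 1)
    (hX : ∀ n, AlmostFull (X n)) :
    AlmostFull (⋂ n, X n) :=
  stmt4_general X hX
end
end

section
/- For every regular sequence (h_n) of functions on [0,1], the set {x ∈ [0,1] : there exists C ∈ ℝ such that h_n(x) < C·(3/4)^n for all n ∈ ℕ} is almost full. -/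
open MeasureTheory Filter Set

noncomputable section

/-! `(4/3)ᵐ hₘ` has integral below `(2/3)ᵐ`, which is not yet summable fast enough
to be regular, but averaging consecutive pairs `m = 2n, 2n+1` gives integrals below
`(5/6)(4/9)ⁿ < 2⁻ⁿ`. On `Ω` of this paired sequence every term is bounded, so
`(4/3)ᵐ hₘ(x)` is bounded, i.e. `hₘ(x) = O((3/4)ᵐ)`. -/

def pairRescaled (h : ℕ → ℝ → ℝ) (n : ℕ) (x : ℝ) : ℝ :=
  ((4/3 : ℝ) ^ (2*n) * h (2*n) x + (4/3 : ℝ) ^ (2*n+1) * h (2*n+1) x) / 2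

lemma le_of_forall_sum_range_le {a : ℕ → ℝ} {γ : ℝ} (ha : ∀ n, 0 ≤ a n)
    (hγ : ∀ m, ∑ n ∈ Finset.range (m+1), a n ≤ γ) (n : ℕ) : a n ≤ γ :=
  (Finset.single_le_sum (fun i _ => ha i) (Finset.self_mem_range_succ n)).trans (hγ n)

section

variable {h : ℕ → ℝ → ℝ}

lemma pairRescaled_nonneg {x : ℝ} (hx : ∀ n, 0 ≤ h n x) (n : ℕ) :
    0 ≤ pairRescaled h n x := by
  have := hx (2*n)
  have := hx (2*n+1)
  unfold pairRescaled
  positivity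

lemma integral_pairRescaled_lt (hreg : RegularSeq h) (n : ℕ) :
    ∫ x in (0:ℝ)..1, pairRescaled h n x < (1/2 : ℝ) ^ n := by
  have hint : ∀ m, IntervalIntegrable (h m) volume 0 1 :=
    fun m => (hreg m).1.intervalIntegrable_of_Icc zero_le_one
  have hI : ∫ x in (0:ℝ)..1, pairRescaled h n x =
      ((4/3 : ℝ) ^ (2*n) * ∫ x in (0:ℝ)..1, h (2*n) x) / 2 +
        ((4/3 : ℝ) ^ (2*n+1) * ∫ x in (0:ℝ)..1, h (2*n+1) x) / 2 := by
    simp only [pairRescaled, add_div, ← intervalIntegral.integral_const_mul,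
      ← intervalIntegral.integral_div]
    exact intervalIntegral.integral_add (((hint _).const_mul _).div_const _)
      (((hint _).const_mul _).div_const _)
  have hterm : ∀ k, (4/3 : ℝ) ^ k * ∫ x in (0:ℝ)..1, h k x < (2/3) ^ k := fun k =>
    calc (4/3 : ℝ) ^ k * ∫ x in (0:ℝ)..1, h k x < (4/3) ^ k * (1/2) ^ k :=
          mul_lt_mul_of_pos_left (hreg k).2.2 (by positivity)
      _ = (2/3) ^ k := by rw [← mul_pow]; norm_num
  have hsum : ((2:ℝ)/3) ^ (2*n) / 2 + (2/3) ^ (2*n+1) / 2 = 5/6 * (4/9) ^ n := by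
    rw [pow_succ, pow_mul]; ring
  have hle : ((4:ℝ)/9) ^ n ≤ (1/2) ^ n := pow_le_pow_left₀ (by norm_num) (by norm_num) n
  rw [hI]
  linarith [hterm (2*n), hterm (2*n+1), pow_pos (by norm_num : (0:ℝ) < 4/9) n]

lemma regularSeq_pairRescaled (hreg : RegularSeq h) : RegularSeq (pairRescaled h) := fun n =>
  ⟨by unfold pairRescaled; exact
      (((continuousOn_const.mul (hreg _).1).add (continuousOn_const.mul (hreg _).1)).div_const _),
    fun _ hx => pairRescaled_nonneg (fun m => (hreg m).2.1 _ hx) n,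
    integral_pairRescaled_lt hreg n⟩

lemma pow_mul_le_two_mul_pairRescaled {x : ℝ} (hx : ∀ n, 0 ≤ h n x) (m : ℕ) :
    (4/3 : ℝ) ^ m * h m x ≤ 2 * pairRescaled h (m / 2) x := by
  have hterm : ∀ k, 0 ≤ (4/3 : ℝ) ^ k * h k x := fun k => mul_nonneg (by positivity) (hx k)
  rcases Nat.even_or_odd' m with ⟨k, rfl | rfl⟩
  · rw [Nat.mul_div_cancel_left k two_pos, pairRescaled]
    linarith [hterm (2*k+1)]
  · rw [show (2*k+1)/2 = k by omega, pairRescaled]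
    linarith [hterm (2*k)]

end

/-- For every regular sequence `(hₙ)`, the set of `x ∈ [0,1]` such that
`hₙ(x) < C·(3/4)ⁿ` for some constant `C` and all `n` is almost full. -/
theorem stmt6 (h : ℕ → ℝ → ℝ) (hreg : RegularSeq h) :
    AlmostFull {x ∈ Set.Icc (0:ℝ) 1 |
      ∃ C : ℝ, ∀ n : ℕ, h n x < C * (3/4 : ℝ)^n} := by
  refine ⟨pairRescaled h, regularSeq_pairRescaled hreg, ?_⟩
  rintro x ⟨hx, γ, hγ⟩
  have hx₀ : ∀ n, 0 ≤ h n x := fun n => (hreg n).2.1 x hx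
  have hbound : ∀ m, (4/3 : ℝ) ^ m * h m x ≤ 2 * γ := fun m =>
    (pow_mul_le_two_mul_pairRescaled hx₀ m).trans <| by
      linarith [le_of_forall_sum_range_le (pairRescaled_nonneg hx₀) hγ (m / 2)]
  refine ⟨hx, 2 * γ + 1, fun m => ?_⟩
  have hpos : (0:ℝ) < (3/4) ^ m := by positivity
  calc h m x = (3/4 : ℝ) ^ m * ((4/3) ^ m * h m x) := by
        rw [← mul_assoc, ← mul_pow]; norm_num
    _ ≤ (3/4 : ℝ) ^ m * (2 * γ) := mul_le_mul_of_nonneg_left (hbound m) hpos.le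
    _ < (2 * γ + 1) * (3/4) ^ m := by linarith
end
end

section
/- Let (h_n) be a regular sequence of functions on [0,1] and define g_n := ((4/3)^{2n}·h_{2n} + (4/3)^{2n+1}·h_{2n+1})/2 for n ∈ ℕ. Then (g_n) is a regular sequence (indeed ∫₀¹ g_n < (5/6)·(4/9)^n ≤ 2^{-n}), and for every x ∈ [0,1] and γ ∈ ℝ such that ∑_{n=0}^m g_n(x) ≤ γ for all m ∈ ℕ, one has h_n(x) ≤ 2γ·(3/4)^n for all n ∈ ℕ. -/
/-!
Scaling `h₂ₙ, h₂ₙ₊₁` by `(4/3)^{2n}, (4/3)^{2n+1}` multiplies their integral bounds `4⁻ⁿ, 2·4⁻ⁿ⁻¹`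
into `(4/9)ⁿ, (2/3)(4/9)ⁿ`, so the averages `gₙ` still have summable integrals. Conversely,
every `(4/3)ᵏ hₖ(x)` is at most twice the single nonnegative term `g_{⌊k/2⌋}(x)`, which is
bounded by any bound `γ` on the partial sums of `∑ gₙ(x)`.
-/

open MeasureTheory Filter Set

noncomputable section

def pairedRescale (c : ℝ) (h : ℕ → ℝ → ℝ) (n : ℕ) (x : ℝ) : ℝ :=
  (c ^ (2 * n) * h (2 * n) x + c ^ (2 * n + 1) * h (2 * n + 1) x) / 2

section pairedRescale

variable {c : ℝ} {h : ℕ → ℝ → ℝ}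

theorem continuousOn_pairedRescale {s : Set ℝ} (hcont : ∀ n, ContinuousOn (h n) s) (n : ℕ) :
    ContinuousOn (pairedRescale c h n) s :=
  ((continuousOn_const.mul (hcont _)).add (continuousOn_const.mul (hcont _))).div_const _

theorem pairedRescale_nonneg (hc : 0 ≤ c) {x : ℝ} (hx : ∀ n, 0 ≤ h n x) (n : ℕ) :
    0 ≤ pairedRescale c h n x := by
  unfold pairedRescale
  have := hx (2 * n)
  have := hx (2 * n + 1)
  positivity

theorem pow_mul_le_two_mul_pairedRescale (hc : 0 ≤ c) {x : ℝ} (hx : ∀ n, 0 ≤ h n x) (k : ℕ) :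
    c ^ k * h k x ≤ 2 * pairedRescale c h (k / 2) x := by
  unfold pairedRescale
  obtain ⟨n, rfl | rfl⟩ := Nat.even_or_odd' k
  · have : 0 ≤ c ^ (2 * n + 1) * h (2 * n + 1) x := mul_nonneg (by positivity) (hx _)
    rw [Nat.mul_div_cancel_left n two_pos]
    linarith
  · have : 0 ≤ c ^ (2 * n) * h (2 * n) x := mul_nonneg (by positivity) (hx _)
    rw [show (2 * n + 1) / 2 = n by omega]
    linarith

theorem RegularSeq.integral_pairedRescale_lt (hreg : RegularSeq h) (hc : 0 < c) (n : ℕ) :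
    ∫ x in (0:ℝ)..1, pairedRescale c h n x < ((c / 2) ^ 2) ^ n * (2 + c) / 4 := by
  have hint : ∀ k, IntervalIntegrable (h k) volume 0 1 := fun k =>
    (hreg k).1.intervalIntegrable_of_Icc zero_le_one
  have heven := mul_lt_mul_of_pos_left (hreg (2 * n)).2.2 (pow_pos hc (2 * n))
  have hodd := mul_lt_mul_of_pos_left (hreg (2 * n + 1)).2.2 (pow_pos hc (2 * n + 1))
  simp only [pairedRescale]
  rw [intervalIntegral.integral_div, intervalIntegral.integral_add ((hint _).const_mul _)
    ((hint _).const_mul _), intervalIntegral.integral_const_mul,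
    intervalIntegral.integral_const_mul]
  have hsplit : ((c / 2) ^ 2) ^ n * (2 + c) / 4 =
      (c ^ (2 * n) * (1 / 2) ^ (2 * n) + c ^ (2 * n + 1) * (1 / 2) ^ (2 * n + 1)) / 2 := by
    rw [← pow_mul, pow_succ, pow_succ, div_pow, one_div_pow]
    field_simp
    ring
  rw [hsplit]
  linarith

end pairedRescale

theorem le_of_forall_sum_range_succ_le {f : ℕ → ℝ} {γ : ℝ} (hf : ∀ n, 0 ≤ f n)
    (hγ : ∀ m, ∑ n ∈ Finset.range (m + 1), f n ≤ γ) (k : ℕ) : f k ≤ γ :=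
  (Finset.single_le_sum (fun n _ => hf n) (Finset.self_mem_range_succ k)).trans (hγ k)

theorem five_sixths_mul_four_ninths_pow_le (n : ℕ) :
    (5/6 : ℝ) * (4/9 : ℝ) ^ n ≤ (1/2 : ℝ) ^ n := by
  have h89 : (8/9 : ℝ) ^ n ≤ 1 := pow_le_one₀ (by norm_num) (by norm_num)
  have hsplit : (4/9 : ℝ) ^ n = (8/9 : ℝ) ^ n * (1/2 : ℝ) ^ n := by
    rw [← mul_pow]; norm_num
  rw [hsplit]
  nlinarith [pow_nonneg (by norm_num : (0:ℝ) ≤ 1/2) n]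

/-- With `gₙ = ((4/3)^{2n} h_{2n} + (4/3)^{2n+1} h_{2n+1})/2`, the sequence `(gₙ)` is
regular (indeed `∫₀¹ gₙ < (5/6)·(4/9)ⁿ`); and whenever the partial sums of `∑ gₙ(x)`
are bounded by `γ`, one has `hₙ(x) ≤ 2γ·(3/4)ⁿ` for all `n`. -/
theorem stmt7 (h : ℕ → ℝ → ℝ) (hreg : RegularSeq h)
    (g : ℕ → ℝ → ℝ)
    (hg : ∀ n x, g n x = ((4/3 : ℝ)^(2*n) * h (2*n) x + (4/3 : ℝ)^(2*n+1) * h (2*n+1) x) / 2) :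
    RegularSeq g ∧
    (∀ n : ℕ, (∫ x in (0:ℝ)..1, g n x) < (5/6 : ℝ) * (4/9 : ℝ)^n ∧
      (5/6 : ℝ) * (4/9 : ℝ)^n ≤ (1/2 : ℝ)^n) ∧
    (∀ x ∈ Set.Icc (0:ℝ) 1, ∀ γ : ℝ,
      (∀ m : ℕ, ∑ n ∈ Finset.range (m+1), g n x ≤ γ) →
      ∀ n : ℕ, h n x ≤ 2 * γ * (3/4 : ℝ)^n) := by
  obtain rfl : g = pairedRescale (4/3) h := funext fun n => funext (hg n)
  have hnonneg {x} (hx : x ∈ Icc (0:ℝ) 1) (n : ℕ) : 0 ≤ h n x := (hreg n).2.1 x hx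
  have hint (n : ℕ) : ∫ x in (0:ℝ)..1, pairedRescale (4/3) h n x < 5/6 * (4/9) ^ n := by
    convert hreg.integral_pairedRescale_lt (c := 4/3) (by norm_num) n using 1
    norm_num
    ring
  refine ⟨fun n => ⟨continuousOn_pairedRescale (fun k => (hreg k).1) n,
      fun x hx => pairedRescale_nonneg (by norm_num) (hnonneg hx) n,
      (hint n).trans_le (five_sixths_mul_four_ninths_pow_le n)⟩,
    fun n => ⟨hint n, five_sixths_mul_four_ninths_pow_le n⟩, ?_⟩
  intro x hx γ hγ n
  have hscaled : (4/3 : ℝ) ^ n * h n x ≤ 2 * γ :=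
    (pow_mul_le_two_mul_pairedRescale (by norm_num) (hnonneg hx) n).trans <| by
      gcongr
      exact le_of_forall_sum_range_succ_le (pairedRescale_nonneg (by norm_num) (hnonneg hx)) hγ _
  calc h n x = (3/4 : ℝ) ^ n * ((4/3 : ℝ) ^ n * h n x) := by
        rw [← mul_assoc, ← mul_pow]; norm_num
    _ ≤ (3/4 : ℝ) ^ n * (2 * γ) := by gcongr
    _ = 2 * γ * (3/4 : ℝ) ^ n := mul_comm _ _
end
end

section
/- The integral of a summable function is well defined: if D ⊆ [0,1] and f : D → ℝ is summable with integral I and also summable with integral I′, then I = I′. -/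
open MeasureTheory Filter Set

noncomputable section

/-- `f : D → ℝ` is *summable with integral `I`* if there are an almost full set `Y ⊆ D`
and continuous functions `Fₙ` on `[0,1]` with `∫₀¹ |Fₙ₊₁ - Fₙ| < 2⁻ⁿ`, `Fₙ(x) → f(x)`
on `Y`, and `∫₀¹ Fₙ → I`. -/
def SummableWithIntegral (D : Set ℝ) (f : ℝ → ℝ) (I : ℝ) : Prop :=
  ∃ (Y : Set ℝ) (F : ℕ → ℝ → ℝ),
    AlmostFull Y ∧ Y ⊆ D ∧
    (∀ n : ℕ, ContinuousOn (F n) (Set.Icc 0 1)) ∧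
    (∀ n : ℕ, (∫ x in (0:ℝ)..1, |F (n+1) x - F n x|) < (1/2 : ℝ) ^ n) ∧
    (∀ x ∈ Y, Tendsto (fun n => F n x) atTop (nhds (f x))) ∧
    Tendsto (fun n => ∫ x in (0:ℝ)..1, F n x) atTop (nhds I)

lemma ae_summable_of_integral_bound (φ : ℕ → ℝ → ℝ) (c : ℝ) (hc : 0 ≤ c)
    (hcont : ∀ n, ContinuousOn (φ n) (Set.Icc 0 1))
    (hpos : ∀ n, ∀ x ∈ Set.Icc (0:ℝ) 1, 0 ≤ φ n x)
    (hint : ∀ n, (∫ x in (0:ℝ)..1, φ n x) ≤ c * (1/2) ^ n) :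
    ∀ᵐ x ∂(volume.restrict (Set.Ioc (0:ℝ) 1)), Summable (fun n => φ n x) := by
  set μ := volume.restrict (Set.Ioc (0:ℝ) 1) with hμ
  have hmeas : ∀ n, AEMeasurable (φ n) μ := fun n =>
    ((hcont n).mono Set.Ioc_subset_Icc_self).aemeasurable measurableSet_Ioc
  have hInt : ∀ n, IntegrableOn (φ n) (Set.Ioc 0 1) := by
    intro n
    have huIcc : Set.uIcc (0:ℝ) 1 = Set.Icc 0 1 := Set.uIcc_of_le (by norm_num)
    have : IntervalIntegrable (φ n) volume 0 1 :=
      ContinuousOn.intervalIntegrable (by rw [huIcc]; exact hcont n)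
    exact (intervalIntegrable_iff_integrableOn_Ioc_of_le (by norm_num)).1 this
  have hnn : ∀ n, 0 ≤ᵐ[μ] φ n := by
    intro n
    filter_upwards [ae_restrict_mem measurableSet_Ioc] with x hx
    exact hpos n x (Set.Ioc_subset_Icc_self hx)
  have key : ∀ n, (∫⁻ x, ENNReal.ofReal (φ n x) ∂μ) = ENNReal.ofReal (∫ x, φ n x ∂μ) :=
    fun n => (ofReal_integral_eq_lintegral_ofReal (hInt n) (hnn n)).symm
  have hfin : (∫⁻ x, ∑' n, ENNReal.ofReal (φ n x) ∂μ) ≠ ⊤ := by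
    rw [lintegral_tsum (fun n => (hmeas n).ennreal_ofReal)]
    have hle : ∀ n, (∫⁻ x, ENNReal.ofReal (φ n x) ∂μ) ≤ ENNReal.ofReal (c * (1/2) ^ n) := by
      intro n
      rw [key n]
      apply ENNReal.ofReal_le_ofReal
      rw [← intervalIntegral.integral_of_le (by norm_num : (0:ℝ) ≤ 1)]
      exact hint n
    refine ne_top_of_le_ne_top ?_ (ENNReal.tsum_le_tsum hle)
    rw [← ENNReal.ofReal_tsum_of_nonneg (fun n => by positivity)
      ((summable_geometric_of_lt_one (by norm_num) (by norm_num)).mul_left c)]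
    exact ENNReal.ofReal_ne_top
  have := ae_lt_top' (AEMeasurable.ennreal_tsum (fun n => (hmeas n).ennreal_ofReal)) hfin
  filter_upwards [this, ae_restrict_mem measurableSet_Ioc] with x hx hx'
  have hsum : Summable (fun n => (ENNReal.ofReal (φ n x)).toReal) :=
    ENNReal.summable_toReal hx.ne
  refine hsum.congr fun n => ?_
  exact ENNReal.toReal_ofReal (hpos n x (Set.Ioc_subset_Icc_self hx'))

lemma abs_le_tsum_tail (a : ℕ → ℝ) (ha : Tendsto a atTop (nhds 0))
    (hs : Summable (fun m => |a (m+1) - a m|)) (n : ℕ) :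
    |a n| ≤ ∑' k, |a (n+k+1) - a (n+k)| := by
  have hs' : Summable (fun k => |a (n+k+1) - a (n+k)|) := by
    have := (summable_nat_add_iff n).2 hs
    exact this.congr fun k => by ring_nf
  have hd : Summable (fun k => a (n+k+1) - a (n+k)) := hs'.of_abs
  have htel : Tendsto (fun m => ∑ k ∈ Finset.range m, (a (n+k+1) - a (n+k))) atTop
      (nhds (0 - a n)) := by
    have heq : ∀ m, ∑ k ∈ Finset.range m, (a (n+k+1) - a (n+k)) = a (n+m) - a n := by
      intro m
      have := Finset.sum_range_sub (fun k => a (n+k)) m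
      simpa [Nat.add_assoc] using this
    simp only [heq]
    have h1 : Tendsto (fun m => a (n+m)) atTop (nhds 0) := by
      have := ha.comp (tendsto_add_atTop_nat n)
      exact this.congr fun m => by simp [Nat.add_comm]
    exact h1.sub tendsto_const_nhds
  have hts : (∑' k, (a (n+k+1) - a (n+k))) = -a n := by
    have h2 := hd.hasSum.tendsto_sum_nat
    have h3 := tendsto_nhds_unique h2 htel
    linarith [h3]
  calc |a n| = |∑' k, (a (n+k+1) - a (n+k))| := by rw [hts, abs_neg]
    _ ≤ ∑' k, |a (n+k+1) - a (n+k)| := by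
        have hn : Summable (fun k => ‖a (n+k+1) - a (n+k)‖) := by
          simpa only [Real.norm_eq_abs] using hs'
        have := norm_tsum_le_tsum_norm hn
        simpa only [Real.norm_eq_abs] using this

lemma ae_mem_Omega (h : ℕ → ℝ → ℝ) (hreg : RegularSeq h) :
    ∀ᵐ x ∂(volume.restrict (Set.Ioc (0:ℝ) 1)), x ∈ Omega h := by
  have := ae_summable_of_integral_bound h 1 zero_le_one (fun n => (hreg n).1)
    (fun n => (hreg n).2.1) (fun n => by simpa using (hreg n).2.2.le)
  filter_upwards [this, ae_restrict_mem measurableSet_Ioc] with x hx hx'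
  refine ⟨Set.Ioc_subset_Icc_self hx', ∑' n, h n x, fun m => ?_⟩
  exact Summable.sum_le_tsum (Finset.range (m+1))
    (fun i _ => (hreg i).2.1 x (Set.Ioc_subset_Icc_self hx')) hx


/-- The integral of a summable function is well defined. -/
theorem stmt10 (D : Set ℝ) (hD : D ⊆ Set.Icc 0 1) (f : ℝ → ℝ) (I I' : ℝ)
    (hf : SummableWithIntegral D f I) (hf' : SummableWithIntegral D f I') :
    I = I' := by
  obtain ⟨Y, F, ⟨h, hreg, hΩY⟩, hYD, hFc, hFd, hFlim, hFI⟩ := hf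
  obtain ⟨Y', F', ⟨h', hreg', hΩY'⟩, hYD', hFc', hFd', hFlim', hFI'⟩ := hf'
  set μ := volume.restrict (Set.Ioc (0:ℝ) 1) with hμ
  -- difference functions
  set G : ℕ → ℝ → ℝ := fun n x => F n x - F' n x with hG
  set φ : ℕ → ℝ → ℝ := fun m x => |F (m+1) x - F m x - (F' (m+1) x - F' m x)| with hφ
  have hφeq : ∀ m x, φ m x = |G (m+1) x - G m x| := by
    intro m x; simp only [hφ, hG]; exact congrArg abs (by ring)
  have hφcont : ∀ m, ContinuousOn (φ m) (Set.Icc 0 1) := fun m =>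
    ((((hFc (m+1)).sub (hFc m)).sub ((hFc' (m+1)).sub (hFc' m))).abs)
  have huIcc : Set.uIcc (0:ℝ) 1 = Set.Icc 0 1 := Set.uIcc_of_le (by norm_num)
  have hII : ∀ (ψ : ℝ → ℝ), ContinuousOn ψ (Set.Icc 0 1) → IntervalIntegrable ψ volume 0 1 :=
    fun ψ hψ => ContinuousOn.intervalIntegrable (by rw [huIcc]; exact hψ)
  have hFint : ∀ n, IntegrableOn (F n) (Set.Ioc 0 1) := fun n =>
    (intervalIntegrable_iff_integrableOn_Ioc_of_le (by norm_num)).1 (hII _ (hFc n))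
  have hFint' : ∀ n, IntegrableOn (F' n) (Set.Ioc 0 1) := fun n =>
    (intervalIntegrable_iff_integrableOn_Ioc_of_le (by norm_num)).1 (hII _ (hFc' n))
  -- integral bound for φ
  have hφint : ∀ m, (∫ x in (0:ℝ)..1, φ m x) ≤ 2 * (1/2) ^ m := by
    intro m
    have hb : ∀ x ∈ Set.Icc (0:ℝ) 1, φ m x ≤ |F (m+1) x - F m x| + |F' (m+1) x - F' m x| :=
      fun x _ => abs_sub _ _
    have h1 : IntervalIntegrable (φ m) volume 0 1 := hII _ (hφcont m)
    have h2 : IntervalIntegrable (fun x => |F (m+1) x - F m x| + |F' (m+1) x - F' m x|)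
        volume 0 1 := hII _ ((((hFc (m+1)).sub (hFc m)).abs).add (((hFc' (m+1)).sub (hFc' m)).abs))
    have := intervalIntegral.integral_mono_on (by norm_num : (0:ℝ) ≤ 1) h1 h2 hb
    have hsplit : (∫ x in (0:ℝ)..1, (|F (m+1) x - F m x| + |F' (m+1) x - F' m x|))
        = (∫ x in (0:ℝ)..1, |F (m+1) x - F m x|) + ∫ x in (0:ℝ)..1, |F' (m+1) x - F' m x| :=
      intervalIntegral.integral_add (hII _ (((hFc (m+1)).sub (hFc m)).abs))
        (hII _ (((hFc' (m+1)).sub (hFc' m)).abs))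
    calc (∫ x in (0:ℝ)..1, φ m x) ≤ _ := this
      _ = (∫ x in (0:ℝ)..1, |F (m+1) x - F m x|) + ∫ x in (0:ℝ)..1, |F' (m+1) x - F' m x| := hsplit
      _ ≤ (1/2)^m + (1/2)^m := add_le_add (hFd m).le (hFd' m).le
      _ = 2 * (1/2) ^ m := by ring
  have hφae : ∀ᵐ x ∂μ, Summable (fun m => φ m x) :=
    ae_summable_of_integral_bound φ 2 (by norm_num) hφcont (fun m x _ => abs_nonneg _) hφint
  -- key pointwise bound, a.e.
  have hptwise : ∀ᵐ x ∂μ, ∀ n, |G n x| ≤ ∑' k, φ (n+k) x := by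
    filter_upwards [hφae, ae_mem_Omega h hreg, ae_mem_Omega h' hreg'] with x hsx hx hx'
    intro n
    have hlim : Tendsto (fun n => G n x) atTop (nhds 0) := by
      have l1 := hFlim x (hΩY hx)
      have l2 := hFlim' x (hΩY' hx')
      have := l1.sub l2
      simpa using this
    have hsG : Summable (fun m => |G (m+1) x - G m x|) :=
      hsx.congr fun m => (hφeq m x)
    have := abs_le_tsum_tail (fun n => G n x) hlim hsG n
    refine this.trans_eq ?_
    exact tsum_congr fun k => (hφeq (n+k) x).symm
  -- measurability
  have hGmeas : ∀ n, AEMeasurable (G n) μ :=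
    fun n => (((hFc n).sub (hFc' n)).mono Set.Ioc_subset_Icc_self).aemeasurable measurableSet_Ioc
  have hφmeas : ∀ m, AEMeasurable (φ m) μ :=
    fun m => ((hφcont m).mono Set.Ioc_subset_Icc_self).aemeasurable measurableSet_Ioc
  -- lintegral bound on each φ m
  have hφlint : ∀ m, (∫⁻ x, ENNReal.ofReal (φ m x) ∂μ) ≤ ENNReal.ofReal (2 * (1/2)^m) := by
    intro m
    have hintOn : IntegrableOn (φ m) (Set.Ioc 0 1) :=
      (intervalIntegrable_iff_integrableOn_Ioc_of_le (by norm_num)).1 (hII _ (hφcont m))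
    have hnn : 0 ≤ᵐ[μ] φ m := Filter.Eventually.of_forall fun x => abs_nonneg _
    rw [← ofReal_integral_eq_lintegral_ofReal hintOn hnn]
    apply ENNReal.ofReal_le_ofReal
    rw [← intervalIntegral.integral_of_le (by norm_num : (0:ℝ) ≤ 1)]
    exact hφint m
  -- main estimate
  have hmain : ∀ n, |∫ x, G n x ∂μ| ≤ 8 * (1/2)^n := by
    intro n
    have habs : |∫ x, G n x ∂μ| ≤ ∫ x, |G n x| ∂μ := by
      simpa [Real.norm_eq_abs] using norm_integral_le_integral_norm (μ := μ) (f := G n)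
    have hmeasabs : AEStronglyMeasurable (fun x => |G n x|) μ := by
      have := (hGmeas n).aestronglyMeasurable.norm
      simpa [Real.norm_eq_abs] using this
    have heq : (∫ x, |G n x| ∂μ) = (∫⁻ x, ENNReal.ofReal (|G n x|) ∂μ).toReal :=
      integral_eq_lintegral_of_nonneg_ae (Filter.Eventually.of_forall fun x => abs_nonneg _)
        hmeasabs
    have hlint : (∫⁻ x, ENNReal.ofReal (|G n x|) ∂μ) ≤ ENNReal.ofReal (8 * (1/2)^n) := by
      have step1 : (∫⁻ x, ENNReal.ofReal (|G n x|) ∂μ)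
          ≤ ∫⁻ x, ∑' k, ENNReal.ofReal (φ (n+k) x) ∂μ := by
        refine lintegral_mono_ae ?_
        filter_upwards [hptwise, hφae] with x hx hsx
        calc ENNReal.ofReal (|G n x|) ≤ ENNReal.ofReal (∑' k, φ (n+k) x) :=
              ENNReal.ofReal_le_ofReal (hx n)
          _ = ∑' k, ENNReal.ofReal (φ (n+k) x) := by
              apply ENNReal.ofReal_tsum_of_nonneg (fun k => abs_nonneg _)
              exact ((summable_nat_add_iff n).2 hsx).congr fun k => by rw [Nat.add_comm]
      have step2 : (∫⁻ x, ∑' k, ENNReal.ofReal (φ (n+k) x) ∂μ)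
          = ∑' k, ∫⁻ x, ENNReal.ofReal (φ (n+k) x) ∂μ :=
        lintegral_tsum fun k => (hφmeas (n+k)).ennreal_ofReal
      have step3 : (∑' k, ∫⁻ x, ENNReal.ofReal (φ (n+k) x) ∂μ)
          ≤ ∑' k, ENNReal.ofReal (2 * (1/2)^(n+k)) :=
        ENNReal.tsum_le_tsum fun k => hφlint (n+k)
      have step4 : (∑' k, ENNReal.ofReal (2 * (1/2)^(n+k))) ≤ ENNReal.ofReal (8 * (1/2)^n) := by
        have hsummable : Summable (fun k : ℕ => 2 * (1/2:ℝ)^(n+k)) := by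
          have : Summable (fun k : ℕ => (1/2:ℝ)^k) :=
            summable_geometric_of_lt_one (by norm_num) (by norm_num)
          exact ((this.mul_left ((1/2:ℝ)^n)).mul_left 2).congr fun k => by
            rw [pow_add]
        rw [← ENNReal.ofReal_tsum_of_nonneg (fun k => by positivity) hsummable]
        apply ENNReal.ofReal_le_ofReal
        have htsum : (∑' k : ℕ, 2 * (1/2:ℝ)^(n+k)) = 4 * (1/2)^n := by
          have h0 : (∑' k : ℕ, (1/2:ℝ)^k) = 2 := by
            rw [tsum_geometric_of_lt_one (by norm_num) (by norm_num)]; norm_num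
          calc (∑' k : ℕ, 2 * (1/2:ℝ)^(n+k))
              = ∑' k : ℕ, (2 * (1/2:ℝ)^n) * (1/2)^k := by
                refine tsum_congr fun k => ?_; rw [pow_add]; ring
            _ = (2 * (1/2:ℝ)^n) * ∑' k : ℕ, (1/2:ℝ)^k := tsum_mul_left
            _ = 4 * (1/2)^n := by rw [h0]; ring
        rw [htsum]
        have : (0:ℝ) ≤ (1/2)^n := by positivity
        linarith
      exact ((step1.trans_eq step2).trans step3).trans step4
    have : (∫⁻ x, ENNReal.ofReal (|G n x|) ∂μ).toReal ≤ 8 * (1/2)^n := by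
      have := ENNReal.toReal_mono ENNReal.ofReal_ne_top hlint
      rwa [ENNReal.toReal_ofReal (by positivity)] at this
    linarith [habs, heq ▸ this]
  -- the integrals converge
  have hset : ∀ (ψ : ℝ → ℝ), (∫ x in (0:ℝ)..1, ψ x) = ∫ x, ψ x ∂μ := fun ψ =>
    intervalIntegral.integral_of_le (by norm_num)
  have hIlim : Tendsto (fun n => ∫ x, F n x ∂μ) atTop (nhds I) := by
    refine hFI.congr fun n => hset (F n)
  have hIlim' : Tendsto (fun n => ∫ x, F' n x ∂μ) atTop (nhds I') := by
    refine hFI'.congr fun n => hset (F' n)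
  have hGint : ∀ n, (∫ x, G n x ∂μ) = (∫ x, F n x ∂μ) - ∫ x, F' n x ∂μ := fun n =>
    integral_sub (hFint n) (hFint' n)
  have hdiff : Tendsto (fun n => ∫ x, G n x ∂μ) atTop (nhds (I - I')) := by
    have := hIlim.sub hIlim'
    exact this.congr fun n => (hGint n).symm
  have hzero : Tendsto (fun n => ∫ x, G n x ∂μ) atTop (nhds 0) := by
    have hb : Tendsto (fun n : ℕ => 8 * (1/2:ℝ)^n) atTop (nhds 0) := by
      have := tendsto_pow_atTop_nhds_zero_of_lt_one (by norm_num : (0:ℝ) ≤ 1/2)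
        (by norm_num : (1/2:ℝ) < 1)
      simpa using this.const_mul 8
    exact squeeze_zero_norm (fun n => by simpa [Real.norm_eq_abs] using hmain n) hb
  have := tendsto_nhds_unique hdiff hzero
  linarith
end
end

section
/- (Levi-type limit theorem.) Let (f_k)_{k∈ℕ} be a sequence of functions f_k : D_k → ℝ with D_k ⊆ [0,1], each summable with integral I_k. Suppose that for every k the function x ↦ |f_{k+1}(x) − f_k(x)|, defined on D_k ∩ D_{k+1}, is summable with an integral strictly less than 2^{-k}. Then there exists an almost full set Y ⊆ ⋂_k D_k such that the limit f(x) := lim_{k→∞} f_k(x) exists for every x ∈ Y, the function f : Y → ℝ is summable, and its integral equals lim_{k→∞} I_k. -/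
open MeasureTheory Filter Set

noncomputable section

namespace Stmt11Aux

lemma uIcc01 : Set.uIcc (0:ℝ) 1 = Set.Icc 0 1 := by
  rw [Set.uIcc_of_le]; norm_num

lemma intInt {g : ℝ → ℝ} (h : ContinuousOn g (Icc 0 1)) :
    IntervalIntegrable g volume 0 1 :=
  ContinuousOn.intervalIntegrable (by rw [uIcc01]; exact h)

lemma itg_nonneg {g : ℝ → ℝ} (h0 : ∀ x ∈ Icc (0:ℝ) 1, 0 ≤ g x) :
    0 ≤ ∫ x in (0:ℝ)..1, g x :=
  intervalIntegral.integral_nonneg (by norm_num) h0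

lemma itg_mono {g1 g2 : ℝ → ℝ} (hi1 : IntervalIntegrable g1 volume 0 1)
    (hi2 : IntervalIntegrable g2 volume 0 1) (hle : ∀ x ∈ Icc (0:ℝ) 1, g1 x ≤ g2 x) :
    (∫ x in (0:ℝ)..1, g1 x) ≤ ∫ x in (0:ℝ)..1, g2 x :=
  intervalIntegral.integral_mono_on (by norm_num) hi1 hi2 hle

lemma abs_telescope (u : ℕ → ℝ) (a m : ℕ) :
    |u (a+m) - u a| ≤ ∑ j ∈ Finset.range m, |u (a+j+1) - u (a+j)| := by
  induction m with
  | zero => simp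
  | succ m ih =>
      rw [Finset.sum_range_succ]
      have : |u (a+(m+1)) - u a| ≤ |u (a+m) - u a| + |u (a+m+1) - u (a+m)| := by
        have := abs_add_le (u (a+m) - u a) (u (a+m+1) - u (a+m))
        have h2 : u (a+(m+1)) - u a = (u (a+m) - u a) + (u (a+m+1) - u (a+m)) := by
          rw [show a+(m+1) = a+m+1 by ring]; ring
        rw [h2]; exact this
      linarith

lemma mem_omega_of_summable {h : ℕ → ℝ → ℝ} {x : ℝ} (hx : x ∈ Icc (0:ℝ) 1)
    (h0 : ∀ n, 0 ≤ h n x) (hs : Summable fun n => h n x) : x ∈ Omega h := by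
  exact ⟨hx, ∑' n, h n x, fun m => Summable.sum_le_tsum _ (fun i _ => h0 i) hs⟩

lemma summable_of_mem_omega {h : ℕ → ℝ → ℝ} {x : ℝ} (hx : x ∈ Omega h)
    (h0 : ∀ n, 0 ≤ h n x) : Summable fun n => h n x := by
  obtain ⟨-, γ, hγ⟩ := hx
  refine summable_of_sum_range_le (c := γ) h0 (fun m => ?_)
  calc ∑ n ∈ Finset.range m, h n x ≤ ∑ n ∈ Finset.range (m+1), h n x := by
        rw [Finset.sum_range_succ]; nlinarith [h0 m]
    _ ≤ γ := hγ m


lemma itg_lintegral {g : ℝ → ℝ} (hc : ContinuousOn g (Icc 0 1))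
    (h0 : ∀ x ∈ Icc (0:ℝ) 1, 0 ≤ g x) :
    ∫⁻ x in Ioc (0:ℝ) 1, ENNReal.ofReal (g x) =
      ENNReal.ofReal (∫ x in (0:ℝ)..1, g x) := by
  rw [intervalIntegral.integral_of_le (by norm_num : (0:ℝ) ≤ 1)]
  refine (ofReal_integral_eq_lintegral_ofReal ?_ ?_).symm
  · exact (hc.integrableOn_Icc).mono_set Ioc_subset_Icc_self
  · exact (ae_restrict_iff' measurableSet_Ioc).2 (ae_of_all _ fun x hx =>
      h0 x ⟨le_of_lt hx.1, hx.2⟩)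

lemma aemeas_ofReal {g : ℝ → ℝ} (hc : ContinuousOn g (Icc 0 1)) :
    AEMeasurable (fun x => ENNReal.ofReal (g x)) (volume.restrict (Ioc (0:ℝ) 1)) :=
  ENNReal.measurable_ofReal.comp_aemeasurable
    (((hc.mono Ioc_subset_Icc_self)).aemeasurable measurableSet_Ioc)

lemma summable_half_pow : Summable (fun n : ℕ => (1/2 : ℝ)^n) :=
  summable_geometric_of_lt_one (by norm_num) (by norm_num)

/-- Lemma B: almost every point of `(0,1]` lies in `Omega h` for a regular `h`. -/
lemma omega_ae {h : ℕ → ℝ → ℝ} (hreg : RegularSeq h) :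
    ∀ᵐ x ∂(volume.restrict (Ioc (0:ℝ) 1)), x ∈ Omega h := by
  set μ := volume.restrict (Ioc (0:ℝ) 1)
  have hmeas : ∀ n, AEMeasurable (fun x => ENNReal.ofReal (h n x)) μ :=
    fun n => aemeas_ofReal (hreg n).1
  have hbound : (∫⁻ x, (∑' n, ENNReal.ofReal (h n x)) ∂μ) ≠ ⊤ := by
    rw [lintegral_tsum hmeas]
    have hle : ∀ n, (∫⁻ x, ENNReal.ofReal (h n x) ∂μ) ≤ ENNReal.ofReal ((1/2:ℝ)^n) := by
      intro n
      rw [show (∫⁻ x, ENNReal.ofReal (h n x) ∂μ) = ∫⁻ x in Ioc (0:ℝ) 1, ENNReal.ofReal (h n x) from rfl,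
        itg_lintegral (hreg n).1 (hreg n).2.1]
      exact ENNReal.ofReal_le_ofReal (le_of_lt (hreg n).2.2)
    refine ne_of_lt (lt_of_le_of_lt (ENNReal.tsum_le_tsum hle) ?_)
    rw [← ENNReal.ofReal_tsum_of_nonneg (fun n => by positivity) summable_half_pow]
    exact ENNReal.ofReal_lt_top
  have hae : ∀ᵐ x ∂μ, (∑' n, ENNReal.ofReal (h n x)) < ⊤ :=
    ae_lt_top' (AEMeasurable.ennreal_tsum hmeas) hbound
  filter_upwards [hae, ae_restrict_mem measurableSet_Ioc] with x hx hxIoc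
  have hxIcc : x ∈ Icc (0:ℝ) 1 := ⟨le_of_lt hxIoc.1, hxIoc.2⟩
  refine ⟨hxIcc, (∑' n, ENNReal.ofReal (h n x)).toReal, fun m => ?_⟩
  have h0 : ∀ n, 0 ≤ h n x := fun n => (hreg n).2.1 x hxIcc
  have : ENNReal.ofReal (∑ n ∈ Finset.range (m+1), h n x)
      ≤ ∑' n, ENNReal.ofReal (h n x) := by
    rw [ENNReal.ofReal_sum_of_nonneg (fun i _ => h0 i)]
    exact ENNReal.sum_le_tsum _
  have := ENNReal.toReal_mono (ne_of_lt hx) this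
  rwa [ENNReal.toReal_ofReal (Finset.sum_nonneg (fun i _ => h0 i))] at this

lemma almostFull_inter {X X' : Set ℝ} (h1 : AlmostFull X) (h2 : AlmostFull X') :
    AlmostFull (X ∩ X') := by
  obtain ⟨u, hu, huX⟩ := h1
  obtain ⟨v, hv, hvX⟩ := h2
  refine ⟨fun n x => u (n+1) x + v (n+1) x, fun n => ⟨((hu (n+1)).1.add (hv (n+1)).1),
      fun x hx => add_nonneg ((hu (n+1)).2.1 x hx) ((hv (n+1)).2.1 x hx), ?_⟩, ?_⟩
  · have hiu := intInt (hu (n+1)).1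
    have hiv := intInt (hv (n+1)).1
    rw [intervalIntegral.integral_add hiu hiv]
    have := (hu (n+1)).2.2
    have := (hv (n+1)).2.2
    have : (1/2:ℝ)^(n+1) + (1/2:ℝ)^(n+1) = (1/2:ℝ)^n := by ring
    nlinarith [(hu (n+1)).2.2, (hv (n+1)).2.2]
  · rintro x ⟨hxIcc, γ, hγ⟩
    have h0u : ∀ n, 0 ≤ u n x := fun n => (hu n).2.1 x hxIcc
    have h0v : ∀ n, 0 ≤ v n x := fun n => (hv n).2.1 x hxIcc
    have hw : ∀ m, ∑ n ∈ Finset.range m, (u (n+1) x + v (n+1) x) ≤ γ := by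
      intro m
      have h1 : ∑ n ∈ Finset.range m, (u (n+1) x + v (n+1) x)
          ≤ ∑ n ∈ Finset.range (m+1), (u (n+1) x + v (n+1) x) :=
        Finset.sum_le_sum_of_subset_of_nonneg
          (Finset.range_subset_range.2 (Nat.le_succ m))
          (fun i _ _ => add_nonneg (h0u _) (h0v _))
      exact h1.trans (by simpa using hγ m)
    have hsw : Summable (fun n => u (n+1) x + v (n+1) x) :=
      summable_of_sum_range_le (fun n => add_nonneg (h0u _) (h0v _)) hw
    constructor
    · refine huX (mem_omega_of_summable hxIcc h0u ?_)
      rw [← summable_nat_add_iff 1]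
      exact Summable.of_nonneg_of_le (fun n => h0u (n+1))
        (fun n => le_add_of_nonneg_right (h0v (n+1))) hsw
    · refine hvX (mem_omega_of_summable hxIcc h0v ?_)
      rw [← summable_nat_add_iff 1]
      exact Summable.of_nonneg_of_le (fun n => h0v (n+1))
        (fun n => le_add_of_nonneg_left (h0u (n+1))) hsw

lemma sum_half_pow_le (n d : ℕ) :
    ∑ j ∈ Finset.range d, (1/2:ℝ)^(n+j) ≤ 2 * (1/2:ℝ)^n := by
  have h1 : ∀ j ∈ Finset.range d, (1/2:ℝ)^(n+j) = (1/2:ℝ)^n * (1/2:ℝ)^j :=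
    fun j _ => pow_add _ _ _
  rw [Finset.sum_congr rfl h1, ← Finset.mul_sum]
  have h2 : ∑ j ∈ Finset.range d, (1/2:ℝ)^j ≤ 2 := by
    have := Summable.sum_le_tsum (Finset.range d) (fun i _ => by positivity) summable_half_pow
    rwa [tsum_geometric_of_lt_one (by norm_num) (by norm_num), show ((1:ℝ) - 1/2)⁻¹ = 2 by norm_num] at this
  nlinarith [pow_pos (by norm_num : (0:ℝ) < 1/2) n]

lemma itg_abs_sub_le (F : ℕ → ℝ → ℝ) (hcont : ∀ n, ContinuousOn (F n) (Icc 0 1))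
    (hd : ∀ n, (∫ x in (0:ℝ)..1, |F (n+1) x - F n x|) < (1/2:ℝ)^n)
    (n m : ℕ) (hnm : n ≤ m) :
    (∫ x in (0:ℝ)..1, |F m x - F n x|) ≤ 2 * (1/2:ℝ)^n := by
  obtain ⟨d, rfl⟩ := Nat.exists_eq_add_of_le hnm
  have hint : ∀ a b : ℕ, IntervalIntegrable (fun x => |F a x - F b x|) volume 0 1 :=
    fun a b => intInt (((hcont a).sub (hcont b)).abs)
  have hsumcont : ContinuousOn (fun x => ∑ j ∈ Finset.range d, |F (n+j+1) x - F (n+j) x|) (Icc 0 1) := by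
    apply continuousOn_finset_sum
    intro j _
    exact ((hcont (n+j+1)).sub (hcont (n+j))).abs
  calc (∫ x in (0:ℝ)..1, |F (n+d) x - F n x|)
      ≤ ∫ x in (0:ℝ)..1, ∑ j ∈ Finset.range d, |F (n+j+1) x - F (n+j) x| := by
        refine itg_mono (hint _ _) (intInt hsumcont) (fun x _ => ?_)
        exact abs_telescope (fun k => F k x) n d
    _ = ∑ j ∈ Finset.range d, ∫ x in (0:ℝ)..1, |F (n+j+1) x - F (n+j) x| :=
        intervalIntegral.integral_finset_sum (fun j _ => hint _ _)
    _ ≤ ∑ j ∈ Finset.range d, (1/2:ℝ)^(n+j) :=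
        Finset.sum_le_sum (fun j _ => le_of_lt (hd (n+j)))
    _ ≤ 2 * (1/2:ℝ)^n := sum_half_pow_le n d

/-- Lemma C: an L¹-Cauchy sequence of continuous functions tending to `0` pointwise on
an almost full set has integrals tending to `0`. -/
lemma tendsto_itg_zero (F : ℕ → ℝ → ℝ) (hcont : ∀ n, ContinuousOn (F n) (Icc 0 1))
    (c : ℕ → ℝ) (hc : Summable c)
    (hd : ∀ n, (∫ x in (0:ℝ)..1, |F (n+1) x - F n x|) ≤ c n)
    (Y : Set ℝ) (hY : AlmostFull Y)
    (hlim : ∀ x ∈ Y, Tendsto (fun n => F n x) atTop (nhds 0)) :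
    Tendsto (fun n => ∫ x in (0:ℝ)..1, F n x) atTop (nhds 0) := by
  obtain ⟨hs, hreg, hsub⟩ := hY
  have hc0 : ∀ n, 0 ≤ c n := fun n =>
    le_trans (itg_nonneg (fun x _ => abs_nonneg _)) (hd n)
  -- the tail sums
  set t : ℕ → ℝ := fun m => ∑' j, c (j + m) with ht
  have htt : Tendsto t atTop (nhds 0) := tendsto_sum_nat_add c
  refine squeeze_zero_norm (fun m => ?_) htt
  rw [Real.norm_eq_abs]
  -- pointwise bound on Omega hs
  have key : ∀ m x, x ∈ Omega hs → Tendsto (fun n => F n x) atTop (nhds 0) →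
      ENNReal.ofReal |F m x| ≤ ∑' j, ENNReal.ofReal |F (m+j+1) x - F (m+j) x| := by
    intro m x hxΩ hFx
    set S := ∑' j, ENNReal.ofReal |F (m+j+1) x - F (m+j) x| with hS
    by_cases hStop : S = ⊤
    · rw [hStop]; exact le_top
    have hb : ∀ N, |F m x| ≤ |F (m+N) x| + S.toReal := by
      intro N
      have h1 : |F (m+N) x - F m x| ≤ ∑ j ∈ Finset.range N, |F (m+j+1) x - F (m+j) x| :=
        abs_telescope (fun k => F k x) m N
      have h2 : ∑ j ∈ Finset.range N, |F (m+j+1) x - F (m+j) x| ≤ S.toReal := by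
        have e1 : ENNReal.ofReal (∑ j ∈ Finset.range N, |F (m+j+1) x - F (m+j) x|)
            ≤ S := by
          rw [ENNReal.ofReal_sum_of_nonneg (fun i _ => abs_nonneg _)]
          exact ENNReal.sum_le_tsum _
        have := ENNReal.toReal_mono hStop e1
        rwa [ENNReal.toReal_ofReal (Finset.sum_nonneg (fun i _ => abs_nonneg _))] at this
      have h3 : |F m x| ≤ |F (m+N) x| + |F (m+N) x - F m x| := by
        have := abs_add_le (F (m+N) x) (F m x - F (m+N) x)
        have h4 : |F m x - F (m+N) x| = |F (m+N) x - F m x| := abs_sub_comm _ _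
        calc |F m x| = |F (m+N) x + (F m x - F (m+N) x)| := by ring_nf
          _ ≤ |F (m+N) x| + |F m x - F (m+N) x| := this
          _ = |F (m+N) x| + |F (m+N) x - F m x| := by rw [h4]
      linarith
    have hlim2 : Tendsto (fun N => |F (m+N) x| + S.toReal) atTop (nhds (0 + S.toReal)) := by
      refine Tendsto.add ?_ tendsto_const_nhds
      have h5 : Tendsto (fun N => F (N + m) x) atTop (nhds 0) :=
        hFx.comp (tendsto_add_atTop_nat m)
      have h6 : Tendsto (fun N => F (m + N) x) atTop (nhds 0) :=
        h5.congr (fun N => by rw [Nat.add_comm])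
      simpa using h6.abs
    have h7 : |F m x| ≤ S.toReal := by
      have := ge_of_tendsto hlim2 (Eventually.of_forall hb)
      linarith
    calc ENNReal.ofReal |F m x| ≤ ENNReal.ofReal S.toReal := ENNReal.ofReal_le_ofReal h7
      _ = S := ENNReal.ofReal_toReal hStop
  -- now the integral bound
  have habs : |∫ x in (0:ℝ)..1, F m x| ≤ ∫ x in (0:ℝ)..1, |F m x| :=
    intervalIntegral.abs_integral_le_integral_abs (by norm_num)
  have e2 : ∫⁻ x in Ioc (0:ℝ) 1, ENNReal.ofReal |F m x|
      = ENNReal.ofReal (∫ x in (0:ℝ)..1, |F m x|) :=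
    itg_lintegral ((hcont m).abs) (fun x _ => abs_nonneg _)
  have hmono_le : (∫⁻ x in Ioc (0:ℝ) 1, ENNReal.ofReal |F m x|)
      ≤ ∫⁻ x in Ioc (0:ℝ) 1, ∑' j, ENNReal.ofReal |F (m+j+1) x - F (m+j) x| := by
    refine lintegral_mono_ae ?_
    filter_upwards [omega_ae hreg] with x hx
    exact key m x hx (hlim x (hsub hx))
  have e3 : (∫⁻ x in Ioc (0:ℝ) 1, ∑' j, ENNReal.ofReal |F (m+j+1) x - F (m+j) x|)
      = ∑' j, ∫⁻ x in Ioc (0:ℝ) 1, ENNReal.ofReal |F (m+j+1) x - F (m+j) x| :=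
    lintegral_tsum (fun j => aemeas_ofReal (((hcont (m+j+1)).sub (hcont (m+j))).abs))
  have e4 : ∀ j, (∫⁻ x in Ioc (0:ℝ) 1, ENNReal.ofReal |F (m+j+1) x - F (m+j) x|)
      ≤ ENNReal.ofReal (c (m+j)) := by
    intro j
    rw [itg_lintegral (g := fun x => |F (m+j+1) x - F (m+j) x|) (((hcont (m+j+1)).sub (hcont (m+j))).abs) (fun x _ => abs_nonneg _)]
    exact ENNReal.ofReal_le_ofReal (hd (m+j))
  have hsummt : Summable (fun j => c (j + m)) := (summable_nat_add_iff m).2 hc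
  have e5 : (∑' j, ENNReal.ofReal (c (m+j))) = ENNReal.ofReal (t m) := by
    rw [ht]
    rw [ENNReal.ofReal_tsum_of_nonneg (fun j => hc0 _) hsummt]
    exact tsum_congr (fun j => by rw [Nat.add_comm])
  have final : ENNReal.ofReal (∫ x in (0:ℝ)..1, |F m x|) ≤ ENNReal.ofReal (t m) := by
    rw [← e2, ← e5]
    exact le_trans hmono_le (le_trans (le_of_eq e3) (ENNReal.tsum_le_tsum e4))
  have htm0 : 0 ≤ t m := tsum_nonneg (fun j => hc0 _)
  have := (ENNReal.ofReal_le_ofReal_iff htm0).1 final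
  linarith


/-- Master combination lemma: build one regular sequence out of a row `ψ` and a
double family `φ`, whose `Omega` controls everything. -/
lemma master (ψ : ℕ → ℝ → ℝ) (φ : ℕ → ℕ → ℝ → ℝ)
    (hψc : ∀ k, ContinuousOn (ψ k) (Icc 0 1))
    (hψ0 : ∀ k x, 0 ≤ ψ k x)
    (hψi : ∀ k, (∫ x in (0:ℝ)..1, ψ k x) < 2 * (1/2:ℝ)^k)
    (hφc : ∀ k n, ContinuousOn (φ k n) (Icc 0 1))
    (hφ0 : ∀ k n x, x ∈ Icc (0:ℝ) 1 → 0 ≤ φ k n x)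
    (hφi : ∀ k n, (∫ x in (0:ℝ)..1, φ k n x) ≤ (1/2:ℝ)^(n + 8*k + 8)) :
    ∃ H : ℕ → ℝ → ℝ, RegularSeq H ∧
      ∀ x ∈ Omega H,
        Summable (fun k => ψ k x) ∧
        (∀ k, Summable (fun n => φ k n x)) ∧
        (∑' (k:ℕ), ∑' (n:ℕ), ENNReal.ofReal (φ k n x)) ≠ ⊤ := by
  set h : ℕ → ℝ → ℝ :=
    fun N x => ψ N x + ∑ k ∈ Finset.range (N+1), φ k (N - k) x with hh
  have hhc : ∀ N, ContinuousOn (h N) (Icc 0 1) := fun N =>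
    (hψc N).add (continuousOn_finset_sum _ (fun k _ => hφc k (N-k)))
  have hh0 : ∀ N x, x ∈ Icc (0:ℝ) 1 → 0 ≤ h N x := fun N x hx =>
    add_nonneg (hψ0 N x) (Finset.sum_nonneg (fun k _ => hφ0 k _ x hx))
  have hhint : ∀ N, IntervalIntegrable (h N) volume 0 1 := fun N => intInt (hhc N)
  have hhi : ∀ N, (∫ x in (0:ℝ)..1, h N x) < 4 * (1/2:ℝ)^N := by
    intro N
    rw [hh]
    rw [intervalIntegral.integral_add (intInt (hψc N))
      (intInt (continuousOn_finset_sum _ (fun k _ => hφc k (N-k)))),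
      intervalIntegral.integral_finset_sum (fun k _ => intInt (hφc k (N-k)))]
    have hb : ∑ k ∈ Finset.range (N+1), (∫ x in (0:ℝ)..1, φ k (N-k) x)
        ≤ 2 * (1/2:ℝ)^(N+8) := by
      calc ∑ k ∈ Finset.range (N+1), (∫ x in (0:ℝ)..1, φ k (N-k) x)
          ≤ ∑ k ∈ Finset.range (N+1), (1/2:ℝ)^((N+8) + k) := by
            refine Finset.sum_le_sum (fun k hk => le_trans (hφi k (N-k)) ?_)
            refine pow_le_pow_of_le_one (by norm_num) (by norm_num) ?_
            have hkN : k ≤ N := Nat.lt_succ_iff.1 (Finset.mem_range.1 hk)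
            omega
        _ ≤ 2 * (1/2:ℝ)^(N+8) := sum_half_pow_le (N+8) (N+1)
    have h2 : (2:ℝ) * (1/2:ℝ)^(N+8) ≤ (1/2:ℝ)^N := by
      rw [pow_add]
      nlinarith [pow_pos (by norm_num : (0:ℝ) < 1/2) N, pow_nonneg (by norm_num : (0:ℝ) ≤ 1/2) N]
    nlinarith [hψi N, pow_pos (by norm_num : (0:ℝ) < 1/2) N]
  refine ⟨fun n => h (n+2), fun n => ⟨hhc (n+2), hh0 (n+2), ?_⟩, ?_⟩
  · calc (∫ x in (0:ℝ)..1, h (n+2) x) < 4 * (1/2:ℝ)^(n+2) := hhi (n+2)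
      _ = (1/2:ℝ)^n := by ring
  · rintro x ⟨hxIcc, γ, hγ⟩
    have h0x : ∀ N, 0 ≤ h N x := fun N => hh0 N x hxIcc
    have hφ0x : ∀ k n, 0 ≤ φ k n x := fun k n => hφ0 k n x hxIcc
    have hsumH : Summable (fun n => h (n+2) x) := by
      refine summable_of_sum_range_le (c := γ) (fun n => h0x (n+2)) (fun m => ?_)
      have h1 : ∑ n ∈ Finset.range m, h (n+2) x ≤ ∑ n ∈ Finset.range (m+1), h (n+2) x :=
        Finset.sum_le_sum_of_subset_of_nonneg (Finset.range_subset_range.2 (Nat.le_succ m))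
          (fun i _ _ => h0x _)
      exact h1.trans (hγ m)
    have hsum_h : Summable (fun N => h N x) := (summable_nat_add_iff 2).1 hsumH
    have hrow : ∀ k, Summable (fun n => φ k n x) := by
      intro k
      refine Summable.of_nonneg_of_le (fun n => hφ0x k n) (fun n => ?_)
        ((summable_nat_add_iff k).2 hsum_h)
      -- φ k n x ≤ h (n+k) x
      have hmem : k ∈ Finset.range (n+k+1) := Finset.mem_range.2 (by omega)
      have hterm : φ k ((n+k) - k) x ≤ ∑ j ∈ Finset.range (n+k+1), φ j ((n+k) - j) x :=
        Finset.single_le_sum (fun j _ => hφ0x j _) hmem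
      have hsub : (n+k) - k = n := by omega
      rw [hsub] at hterm
      calc φ k n x ≤ ∑ j ∈ Finset.range (n+k+1), φ j ((n+k) - j) x := hterm
        _ ≤ h (n+k) x := le_add_of_nonneg_left (hψ0 _ x)
    refine ⟨?_, hrow, ?_⟩
    · refine Summable.of_nonneg_of_le (fun k => hψ0 k x) (fun k => ?_) hsum_h
      exact le_add_of_nonneg_right (Finset.sum_nonneg (fun j _ => hφ0x j _))
    · -- double tsum finite
      set u : ℕ × ℕ → ENNReal := fun p => ENNReal.ofReal (φ p.1 p.2 x) with hu
      set v : ℕ × ℕ → ENNReal :=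
        fun q => if q.2 ≤ q.1 then ENNReal.ofReal (φ q.2 (q.1 - q.2) x) else 0 with hv
      have step1 : (∑' (k:ℕ), ∑' (n:ℕ), ENNReal.ofReal (φ k n x)) = ∑' p, u p :=
        (ENNReal.tsum_prod' (f := u)).symm
      have step2 : ∀ p : ℕ × ℕ, u p = v (p.1 + p.2, p.1) := by
        rintro ⟨k, n⟩
        simp only [hu, hv]
        have he : k + n - k = n := by omega
        rw [if_pos (by omega : k ≤ k + n), he]
      have hinj : Function.Injective (fun p : ℕ × ℕ => ((p.1 + p.2, p.1) : ℕ × ℕ)) := by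
        rintro ⟨a, b⟩ ⟨c, d⟩ hpq
        simp only [Prod.mk.injEq] at hpq
        obtain ⟨h1, h2⟩ := hpq
        subst h2
        exact Prod.ext rfl (by omega)
      have step3 : (∑' p, u p) ≤ ∑' q, v q := by
        calc (∑' p, u p) = ∑' p : ℕ × ℕ, v (p.1 + p.2, p.1) := tsum_congr step2
          _ ≤ ∑' q, v q := ENNReal.tsum_comp_le_tsum_of_injective hinj v
      have step5 : ∀ N, (∑' k, v (N, k)) = ∑ k ∈ Finset.range (N+1),
          ENNReal.ofReal (φ k (N - k) x) := by
        intro N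
        rw [tsum_eq_sum (s := Finset.range (N+1))
          (fun k hk => by
            rw [hv]
            simp only
            rw [if_neg]
            intro hle
            exact hk (Finset.mem_range.2 (by omega)))]
        refine Finset.sum_congr rfl (fun k hk => ?_)
        rw [hv]
        simp only
        rw [if_pos (Nat.lt_succ_iff.1 (Finset.mem_range.1 hk))]
      have step6 : ∀ N, (∑' k, v (N, k)) ≤ ENNReal.ofReal (h N x) := by
        intro N
        rw [step5 N]
        rw [← ENNReal.ofReal_sum_of_nonneg (fun k _ => hφ0x k _)]
        exact ENNReal.ofReal_le_ofReal (le_add_of_nonneg_left (hψ0 _ x))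
      have step7 : (∑' q, v q) ≤ ∑' N, ENNReal.ofReal (h N x) := by
        rw [ENNReal.tsum_prod']
        exact ENNReal.tsum_le_tsum step6
      have step8 : (∑' N, ENNReal.ofReal (h N x)) ≠ ⊤ := by
        rw [← ENNReal.ofReal_tsum_of_nonneg h0x hsum_h]
        exact ENNReal.ofReal_ne_top
      rw [step1]
      exact ne_top_of_le_ne_top step8 (le_trans step3 step7)


lemma sum_le_toReal {a : ℕ → ℝ} (h0 : ∀ n, 0 ≤ a n)
    (hS : (∑' n, ENNReal.ofReal (a n)) ≠ ⊤) (m : ℕ) :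
    ∑ n ∈ Finset.range m, a n ≤ (∑' n, ENNReal.ofReal (a n)).toReal := by
  have e1 : ENNReal.ofReal (∑ n ∈ Finset.range m, a n) ≤ ∑' n, ENNReal.ofReal (a n) := by
    rw [ENNReal.ofReal_sum_of_nonneg (fun i _ => h0 i)]
    exact ENNReal.sum_le_tsum _
  have := ENNReal.toReal_mono hS e1
  rwa [ENNReal.toReal_ofReal (Finset.sum_nonneg (fun i _ => h0 i))] at this


end Stmt11Aux

open Stmt11Aux

/-- Levi-type limit theorem: if each `f_k : D_k → ℝ` is summable with integral `I_k` and
`|f_{k+1} - f_k|` is summable on `D_k ∩ D_{k+1}` with integral `< 2⁻ᵏ`, then the pointwise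
limit exists on an almost full set `Y ⊆ ⋂ₖ D_k`, is summable there, and its integral is
`lim I_k`. -/
theorem stmt11 (D : ℕ → Set ℝ) (hD : ∀ k, D k ⊆ Set.Icc 0 1)
    (f : ℕ → ℝ → ℝ) (I : ℕ → ℝ)
    (hf : ∀ k, SummableWithIntegral (D k) (f k) (I k))
    (hdiff : ∀ k, ∃ J : ℝ, J < (1/2 : ℝ)^k ∧
      SummableWithIntegral (D k ∩ D (k+1)) (fun x => |f (k+1) x - f k x|) J) :
    ∃ (Y : Set ℝ) (g : ℝ → ℝ) (L : ℝ),
      AlmostFull Y ∧ Y ⊆ (⋂ k, D k) ∧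
      (∀ x ∈ Y, Tendsto (fun k => f k x) atTop (nhds (g x))) ∧
      SummableWithIntegral Y g L ∧
      Tendsto I atTop (nhds L) := by
  classical
  choose Yk F hYaf hYD hFc hFd hFlim hFint using hf
  choose J hJ hdiff' using hdiff
  choose Zk G hZaf hZD hGc hGd hGlim hGint using hdiff'
  choose hy hyreg hysub using hYaf
  choose hz hzreg hzsub using hZaf
  have hYaf : ∀ k, AlmostFull (Yk k) := fun k => ⟨hy k, hyreg k, hysub k⟩
  have hZaf : ∀ k, AlmostFull (Zk k) := fun k => ⟨hz k, hzreg k, hzsub k⟩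
  -- Step 1a : ∫ |G k n| → J k
  have habsG : ∀ k, Tendsto (fun n => ∫ x in (0:ℝ)..1, |G k n x|) atTop (nhds (J k)) := by
    intro k
    have hWc : ∀ n, ContinuousOn (fun x => |G k n x| - G k n x) (Icc 0 1) :=
      fun n => (hGc k n).abs.sub (hGc k n)
    have hW0 : Tendsto (fun n => ∫ x in (0:ℝ)..1, (|G k n x| - G k n x)) atTop (nhds 0) := by
      refine tendsto_itg_zero _ hWc (fun n => 2 * (1/2:ℝ)^n)
        (summable_half_pow.mul_left 2) (fun n => ?_) (Zk k) (hZaf k) (fun x hx => ?_)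
      · -- L¹ bound
        show (∫ x in (0:ℝ)..1, |(|G k (n+1) x| - G k (n+1) x) - (|G k n x| - G k n x)|)
            ≤ 2 * (1/2:ℝ)^n
        have hpt : ∀ x ∈ Icc (0:ℝ) 1,
            |(|G k (n+1) x| - G k (n+1) x) - (|G k n x| - G k n x)|
              ≤ 2 * |G k (n+1) x - G k n x| := by
          intro x _
          have harg : (|G k (n+1) x| - G k (n+1) x) - (|G k n x| - G k n x)
              = (|G k (n+1) x| - |G k n x|) - (G k (n+1) x - G k n x) := by ring
          rw [harg]
          have h1 : |(|G k (n+1) x| - |G k n x|)| ≤ |G k (n+1) x - G k n x| :=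
            abs_abs_sub_abs_le_abs_sub _ _
          have h2 := abs_sub (|G k (n+1) x| - |G k n x|) (G k (n+1) x - G k n x)
          linarith
        have hi1 : IntervalIntegrable
            (fun x => |(|G k (n+1) x| - G k (n+1) x) - (|G k n x| - G k n x)|) volume 0 1 :=
          intInt (((hWc (n+1)).sub (hWc n)).abs)
        have hi2 : IntervalIntegrable (fun x => 2 * |G k (n+1) x - G k n x|) volume 0 1 :=
          (intInt (((hGc k (n+1)).sub (hGc k n)).abs)).const_mul 2
        calc (∫ x in (0:ℝ)..1, |(|G k (n+1) x| - G k (n+1) x) - (|G k n x| - G k n x)|)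
            ≤ ∫ x in (0:ℝ)..1, 2 * |G k (n+1) x - G k n x| := itg_mono hi1 hi2 hpt
          _ = 2 * ∫ x in (0:ℝ)..1, |G k (n+1) x - G k n x| := by
              rw [intervalIntegral.integral_const_mul]
          _ ≤ 2 * (1/2:ℝ)^n := by nlinarith [hGd k n]
      · -- pointwise limit 0 on Zk k
        have hgl := hGlim k x hx
        set l := |f (k+1) x - f k x| with hl
        have h1 : Tendsto (fun n => |G k n x| - G k n x) atTop
            (nhds (|l| - l)) := hgl.abs.sub hgl
        have h2 : |l| = l := abs_of_nonneg (abs_nonneg _)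
        rw [h2, sub_self] at h1
        exact h1
    have heq : ∀ n, (∫ x in (0:ℝ)..1, (|G k n x| - G k n x))
        = (∫ x in (0:ℝ)..1, |G k n x|) - ∫ x in (0:ℝ)..1, G k n x :=
      fun n => intervalIntegral.integral_sub (intInt (hGc k n).abs) (intInt (hGc k n))
    have := hW0.add (hGint k)
    rw [zero_add] at this
    refine this.congr (fun n => ?_)
    rw [heq n]; ring
  -- Step 1b : ∫ |F (k+1) n - F k n| → J k
  have hFGd : ∀ k, Tendsto (fun n => ∫ x in (0:ℝ)..1, |F (k+1) n x - F k n x|)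
      atTop (nhds (J k)) := by
    intro k
    have hWc : ∀ n, ContinuousOn (fun x => |F (k+1) n x - F k n x| - G k n x) (Icc 0 1) :=
      fun n => ((hFc (k+1) n).sub (hFc k n)).abs.sub (hGc k n)
    have hW0 : Tendsto
        (fun n => ∫ x in (0:ℝ)..1, (|F (k+1) n x - F k n x| - G k n x)) atTop (nhds 0) := by
      refine tendsto_itg_zero _ hWc (fun n => 3 * (1/2:ℝ)^n)
        (summable_half_pow.mul_left 3) (fun n => ?_)
        ((Yk k ∩ Yk (k+1)) ∩ Zk k)
        (almostFull_inter (almostFull_inter (hYaf k) (hYaf (k+1))) (hZaf k))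
        (fun x hx => ?_)
      · show (∫ x in (0:ℝ)..1,
            |(|F (k+1) (n+1) x - F k (n+1) x| - G k (n+1) x)
              - (|F (k+1) n x - F k n x| - G k n x)|) ≤ 3 * (1/2:ℝ)^n
        have hpt : ∀ x ∈ Icc (0:ℝ) 1,
            |(|F (k+1) (n+1) x - F k (n+1) x| - G k (n+1) x)
              - (|F (k+1) n x - F k n x| - G k n x)|
            ≤ |F (k+1) (n+1) x - F (k+1) n x| + |F k (n+1) x - F k n x|
              + |G k (n+1) x - G k n x| := by
          intro x _
          have harg : (|F (k+1) (n+1) x - F k (n+1) x| - G k (n+1) x)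
              - (|F (k+1) n x - F k n x| - G k n x)
              = (|F (k+1) (n+1) x - F k (n+1) x| - |F (k+1) n x - F k n x|)
                - (G k (n+1) x - G k n x) := by ring
          rw [harg]
          have h1 : |(|F (k+1) (n+1) x - F k (n+1) x| - |F (k+1) n x - F k n x|)|
              ≤ |(F (k+1) (n+1) x - F k (n+1) x) - (F (k+1) n x - F k n x)| :=
            abs_abs_sub_abs_le_abs_sub _ _
          have h1' : |(F (k+1) (n+1) x - F k (n+1) x) - (F (k+1) n x - F k n x)|
              ≤ |F (k+1) (n+1) x - F (k+1) n x| + |F k (n+1) x - F k n x| := by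
            have harg2 : (F (k+1) (n+1) x - F k (n+1) x) - (F (k+1) n x - F k n x)
                = (F (k+1) (n+1) x - F (k+1) n x) - (F k (n+1) x - F k n x) := by ring
            rw [harg2]
            exact abs_sub _ _
          have h2 := abs_sub (|F (k+1) (n+1) x - F k (n+1) x| - |F (k+1) n x - F k n x|)
            (G k (n+1) x - G k n x)
          linarith
        have hi1 : IntervalIntegrable (fun x =>
            |(|F (k+1) (n+1) x - F k (n+1) x| - G k (n+1) x)
              - (|F (k+1) n x - F k n x| - G k n x)|) volume 0 1 :=
          intInt (((hWc (n+1)).sub (hWc n)).abs)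
        have hia : IntervalIntegrable (fun x => |F (k+1) (n+1) x - F (k+1) n x|) volume 0 1 :=
          intInt (((hFc (k+1) (n+1)).sub (hFc (k+1) n)).abs)
        have hib : IntervalIntegrable (fun x => |F k (n+1) x - F k n x|) volume 0 1 :=
          intInt (((hFc k (n+1)).sub (hFc k n)).abs)
        have hic : IntervalIntegrable (fun x => |G k (n+1) x - G k n x|) volume 0 1 :=
          intInt (((hGc k (n+1)).sub (hGc k n)).abs)
        calc (∫ x in (0:ℝ)..1,
            |(|F (k+1) (n+1) x - F k (n+1) x| - G k (n+1) x)
              - (|F (k+1) n x - F k n x| - G k n x)|)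
            ≤ ∫ x in (0:ℝ)..1, (|F (k+1) (n+1) x - F (k+1) n x| + |F k (n+1) x - F k n x|
              + |G k (n+1) x - G k n x|) := itg_mono hi1 ((hia.add hib).add hic) hpt
          _ = (∫ x in (0:ℝ)..1, |F (k+1) (n+1) x - F (k+1) n x|)
              + (∫ x in (0:ℝ)..1, |F k (n+1) x - F k n x|)
              + (∫ x in (0:ℝ)..1, |G k (n+1) x - G k n x|) := by
              rw [intervalIntegral.integral_add (hia.add hib) hic,
                intervalIntegral.integral_add hia hib]
          _ ≤ 3 * (1/2:ℝ)^n := by nlinarith [hFd (k+1) n, hFd k n, hGd k n]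
      · -- pointwise limit 0
        obtain ⟨⟨hxY, hxY1⟩, hxZ⟩ := hx
        have hF1 := hFlim (k+1) x hxY1
        have hF0 := hFlim k x hxY
        have hgl := hGlim k x hxZ
        have h1 : Tendsto (fun n => |F (k+1) n x - F k n x| - G k n x) atTop
            (nhds (|f (k+1) x - f k x| - |f (k+1) x - f k x|)) :=
          ((hF1.sub hF0).abs).sub hgl
        rw [sub_self] at h1
        exact h1
    have heq : ∀ n, (∫ x in (0:ℝ)..1, (|F (k+1) n x - F k n x| - G k n x))
        = (∫ x in (0:ℝ)..1, |F (k+1) n x - F k n x|) - ∫ x in (0:ℝ)..1, G k n x :=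
      fun n => intervalIntegral.integral_sub
        (intInt ((hFc (k+1) n).sub (hFc k n)).abs) (intInt (hGc k n))
    have h2 := hW0.add (hGint k)
    rw [zero_add] at h2
    refine h2.congr (fun n => ?_)
    rw [heq n]; ring
  -- J is nonnegative
  have hJ0 : ∀ k, 0 ≤ J k :=
    fun k => ge_of_tendsto (habsG k)
      (Eventually.of_forall (fun n => itg_nonneg (fun x _ => abs_nonneg _)))
  have hJsum : Summable J :=
    Summable.of_nonneg_of_le hJ0 (fun k => le_of_lt (hJ k)) summable_half_pow
  -- I is Cauchy with limit L
  have hIdiff : ∀ k, |I (k+1) - I k| ≤ J k := by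
    intro k
    have h1 : Tendsto (fun n => |(∫ x in (0:ℝ)..1, F (k+1) n x) - ∫ x in (0:ℝ)..1, F k n x|)
        atTop (nhds (|I (k+1) - I k|)) := ((hFint (k+1)).sub (hFint k)).abs
    refine le_of_tendsto_of_tendsto h1 (hFGd k) (Eventually.of_forall (fun n => ?_))
    show |(∫ x in (0:ℝ)..1, F (k+1) n x) - ∫ x in (0:ℝ)..1, F k n x|
        ≤ ∫ x in (0:ℝ)..1, |F (k+1) n x - F k n x|
    have he : (∫ x in (0:ℝ)..1, F (k+1) n x) - (∫ x in (0:ℝ)..1, F k n x)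
        = ∫ x in (0:ℝ)..1, (F (k+1) n x - F k n x) :=
      (intervalIntegral.integral_sub (intInt (hFc (k+1) n)) (intInt (hFc k n))).symm
    rw [he]
    exact intervalIntegral.abs_integral_le_integral_abs (by norm_num)
  obtain ⟨L, hL⟩ : ∃ L, Tendsto I atTop (nhds L) := by
    refine cauchySeq_tendsto_of_complete (cauchySeq_of_dist_le_of_summable J ?_ hJsum)
    intro n
    rw [Real.dist_eq, abs_sub_comm]
    exact hIdiff n
  -- choice of indices p
  have hpex : ∀ k, ∃ pk, 8*k+10 ≤ pk ∧ (∫ x in (0:ℝ)..1, |G k pk x|) < 2*(1/2:ℝ)^k := by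
    intro k
    have h1 : ∀ᶠ n in atTop, (∫ x in (0:ℝ)..1, |G k n x|) < 2*(1/2:ℝ)^k := by
      refine (habsG k).eventually_lt_const ?_
      have := hJ k
      nlinarith [pow_pos (by norm_num : (0:ℝ) < 1/2) k]
    exact ((eventually_ge_atTop (8*k+10)).and h1).exists
  choose p hp1 hp2 using hpex
  set s : ℕ → ℕ := fun k => 8*k+10 with hs
  -- master sequence
  set ψ : ℕ → ℝ → ℝ := fun k x => |G k (p k) x| with hψ
  set φ : ℕ → ℕ → ℝ → ℝ := fun k n x =>
    hy k (s k + n) x + hz k (s k + n) x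
      + |G k (p k + n + 1) x - G k (p k + n) x|
      + |F k (s k + n + 1) x - F k (s k + n) x| with hφ
  have hφcont : ∀ k n, ContinuousOn (φ k n) (Icc 0 1) := by
    intro k n
    refine ContinuousOn.add (ContinuousOn.add (ContinuousOn.add ?_ ?_) ?_) ?_
    · exact (hyreg k (s k + n)).1
    · exact (hzreg k (s k + n)).1
    · exact ((hGc k (p k + n + 1)).sub (hGc k (p k + n))).abs
    · exact ((hFc k (s k + n + 1)).sub (hFc k (s k + n))).abs
  have hφ0 : ∀ k n, ∀ x ∈ Icc (0:ℝ) 1, 0 ≤ φ k n x := by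
    intro k n x hx
    have h1 := (hyreg k (s k + n)).2.1 x hx
    have h2 := (hzreg k (s k + n)).2.1 x hx
    have h3 := abs_nonneg (G k (p k + n + 1) x - G k (p k + n) x)
    have h4 := abs_nonneg (F k (s k + n + 1) x - F k (s k + n) x)
    show (0:ℝ) ≤ _ + _ + _ + _
    positivity
  have hφint : ∀ k n, (∫ x in (0:ℝ)..1, φ k n x) ≤ (1/2:ℝ)^(n + 8*k + 8) := by
    intro k n
    have hiy := intInt (hyreg k (s k + n)).1
    have hiz := intInt (hzreg k (s k + n)).1
    have hiG : IntervalIntegrable (fun x => |G k (p k + n + 1) x - G k (p k + n) x|) volume 0 1 := intInt (((hGc k (p k + n + 1)).sub (hGc k (p k + n))).abs)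
    have hiF : IntervalIntegrable (fun x => |F k (s k + n + 1) x - F k (s k + n) x|) volume 0 1 := intInt (((hFc k (s k + n + 1)).sub (hFc k (s k + n))).abs)
    have he : (∫ x in (0:ℝ)..1, φ k n x)
        = (∫ x in (0:ℝ)..1, hy k (s k + n) x) + (∫ x in (0:ℝ)..1, hz k (s k + n) x)
          + (∫ x in (0:ℝ)..1, |G k (p k + n + 1) x - G k (p k + n) x|)
          + (∫ x in (0:ℝ)..1, |F k (s k + n + 1) x - F k (s k + n) x|) := by
      rw [hφ]
      rw [intervalIntegral.integral_add ((hiy.add hiz).add hiG) hiF,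
        intervalIntegral.integral_add (hiy.add hiz) hiG,
        intervalIntegral.integral_add hiy hiz]
    have b1 : (∫ x in (0:ℝ)..1, hy k (s k + n) x) < (1/2:ℝ)^(n + 8*k + 10) := by
      have hb := (hyreg k (s k + n)).2.2
      have he2 : s k + n = n + 8*k + 10 := by simp only [hs]; omega
      rw [show ((1/2:ℝ))^(s k + n) = (1/2:ℝ)^(n + 8*k + 10) from by rw [he2]] at hb
      exact hb
    have b2 : (∫ x in (0:ℝ)..1, hz k (s k + n) x) < (1/2:ℝ)^(n + 8*k + 10) := by
      have hb := (hzreg k (s k + n)).2.2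
      have he2 : s k + n = n + 8*k + 10 := by simp only [hs]; omega
      rw [show ((1/2:ℝ))^(s k + n) = (1/2:ℝ)^(n + 8*k + 10) from by rw [he2]] at hb
      exact hb
    have b3 : (∫ x in (0:ℝ)..1, |G k (p k + n + 1) x - G k (p k + n) x|)
        < (1/2:ℝ)^(n + 8*k + 10) := by
      refine lt_of_lt_of_le (hGd k (p k + n)) ?_
      refine pow_le_pow_of_le_one (by norm_num) (by norm_num) ?_
      have := hp1 k
      omega
    have b4 : (∫ x in (0:ℝ)..1, |F k (s k + n + 1) x - F k (s k + n) x|)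
        < (1/2:ℝ)^(n + 8*k + 10) := by
      refine lt_of_lt_of_le (hFd k (s k + n)) ?_
      refine pow_le_pow_of_le_one (by norm_num) (by norm_num) ?_
      simp only [hs]; omega
    have hpow : (4:ℝ) * (1/2:ℝ)^(n + 8*k + 10) = (1/2:ℝ)^(n + 8*k + 8) := by
      have : n + 8*k + 10 = (n + 8*k + 8) + 2 := by omega
      rw [this, pow_add]
      ring
    rw [he]
    nlinarith [b1, b2, b3, b4]
  obtain ⟨H, hHreg, hHprop⟩ := master ψ φ
    (fun k => (hGc k (p k)).abs) (fun k x => abs_nonneg _) (fun k => hp2 k)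
    hφcont hφ0 hφint
  -- pointwise analysis on Omega H
  set g : ℝ → ℝ := fun x => limUnder atTop (fun k => f k x) with hg
  have hxall : ∀ x ∈ Omega H, (∀ k, x ∈ Yk k) ∧
      Tendsto (fun k => f k x) atTop (nhds (g x)) ∧
      Tendsto (fun k => F k (s k) x) atTop (nhds (g x)) := by
    intro x hxΩ
    have hxIcc : x ∈ Icc (0:ℝ) 1 := hxΩ.1
    obtain ⟨hψsum, hrow, hdub⟩ := hHprop x hxΩ
    have hψx : Summable (fun k => |G k (p k) x|) := hψsum
    -- nonnegativity of components
    have ha0 : ∀ k n, 0 ≤ hy k (s k + n) x := fun k n => (hyreg k _).2.1 x hxIcc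
    have hb0 : ∀ k n, 0 ≤ hz k (s k + n) x := fun k n => (hzreg k _).2.1 x hxIcc
    have hφeq : ∀ k n, φ k n x = hy k (s k + n) x + hz k (s k + n) x
        + |G k (p k + n + 1) x - G k (p k + n) x|
        + |F k (s k + n + 1) x - F k (s k + n) x| := fun k n => rfl
    -- membership in Yk and Zk
    have hxY : ∀ k, x ∈ Yk k := by
      intro k
      have h1 : Summable (fun n => hy k (s k + n) x) := by
        refine Summable.of_nonneg_of_le (ha0 k) (fun n => ?_) (hrow k)
        rw [hφeq k n]
        nlinarith [hb0 k n, abs_nonneg (G k (p k + n + 1) x - G k (p k + n) x),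
          abs_nonneg (F k (s k + n + 1) x - F k (s k + n) x)]
      have h2 : Summable (fun n => hy k (n + s k) x) :=
        h1.congr (fun n => by rw [Nat.add_comm])
      exact hysub k (mem_omega_of_summable hxIcc
        (fun n => (hyreg k n).2.1 x hxIcc) ((summable_nat_add_iff (s k)).1 h2))
    have hxZ : ∀ k, x ∈ Zk k := by
      intro k
      have h1 : Summable (fun n => hz k (s k + n) x) := by
        refine Summable.of_nonneg_of_le (hb0 k) (fun n => ?_) (hrow k)
        rw [hφeq k n]
        nlinarith [ha0 k n, abs_nonneg (G k (p k + n + 1) x - G k (p k + n) x),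
          abs_nonneg (F k (s k + n + 1) x - F k (s k + n) x)]
      have h2 : Summable (fun n => hz k (n + s k) x) :=
        h1.congr (fun n => by rw [Nat.add_comm])
      exact hzsub k (mem_omega_of_summable hxIcc
        (fun n => (hzreg k n).2.1 x hxIcc) ((summable_nat_add_iff (s k)).1 h2))
    -- tail sums for the G-delta  row and F-delta  row
    set SC : ℕ → ENNReal :=
      fun k => ∑' n, ENNReal.ofReal |G k (p k + n + 1) x - G k (p k + n) x| with hSC
    set SE : ℕ → ENNReal :=
      fun k => ∑' n, ENNReal.ofReal |F k (s k + n + 1) x - F k (s k + n) x| with hSE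
    have hSCle : ∀ k, SC k ≤ ∑' n, ENNReal.ofReal (φ k n x) := by
      intro k
      refine ENNReal.tsum_le_tsum (fun n => ENNReal.ofReal_le_ofReal ?_)
      rw [hφeq k n]
      nlinarith [ha0 k n, hb0 k n, abs_nonneg (F k (s k + n + 1) x - F k (s k + n) x)]
    have hSEle : ∀ k, SE k ≤ ∑' n, ENNReal.ofReal (φ k n x) := by
      intro k
      refine ENNReal.tsum_le_tsum (fun n => ENNReal.ofReal_le_ofReal ?_)
      rw [hφeq k n]
      nlinarith [ha0 k n, hb0 k n, abs_nonneg (G k (p k + n + 1) x - G k (p k + n) x)]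
    have hSCne' : (∑' k, SC k) ≠ ⊤ := ne_top_of_le_ne_top hdub (ENNReal.tsum_le_tsum hSCle)
    have hSEne' : (∑' k, SE k) ≠ ⊤ := ne_top_of_le_ne_top hdub (ENNReal.tsum_le_tsum hSEle)
    have hSCne : ∀ k, SC k ≠ ⊤ := fun k => (ENNReal.lt_top_of_tsum_ne_top hSCne' k).ne
    have hSEne : ∀ k, SE k ≠ ⊤ := fun k => (ENNReal.lt_top_of_tsum_ne_top hSEne' k).ne
    have hTCsum : Summable (fun k => (SC k).toReal) := ENNReal.summable_toReal hSCne'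
    have hTEsum : Summable (fun k => (SE k).toReal) := ENNReal.summable_toReal hSEne'
    have hTCbound : ∀ k m, ∑ j ∈ Finset.range m, |G k (p k + j + 1) x - G k (p k + j) x|
        ≤ (SC k).toReal := fun k m => sum_le_toReal (fun j => abs_nonneg _) (hSCne k) m
    have hTEbound : ∀ k m, ∑ j ∈ Finset.range m, |F k (s k + j + 1) x - F k (s k + j) x|
        ≤ (SE k).toReal := fun k m => sum_le_toReal (fun j => abs_nonneg _) (hSEne k) m
    -- pointwise bound on |f (k+1) - f k|
    have hx6 : ∀ k, |f (k+1) x - f k x| ≤ |G k (p k) x| + (SC k).toReal := by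
      intro k
      have hGl : Tendsto (fun n => G k n x) atTop (nhds |f (k+1) x - f k x|) := hGlim k x (hxZ k)
      have hGp : Tendsto (fun m => G k (p k + m) x) atTop (nhds |f (k+1) x - f k x|) :=
        (hGl.comp (tendsto_add_atTop_nat (p k))).congr
          (fun m => by simp only [Function.comp_apply]; rw [Nat.add_comm])
      refine le_of_tendsto hGp (Eventually.of_forall (fun m => ?_))
      have h1 : |G k (p k + m) x - G k (p k) x|
          ≤ ∑ j ∈ Finset.range m, |G k (p k + j + 1) x - G k (p k + j) x| :=
        abs_telescope (fun i => G k i x) (p k) m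
      have h2 := le_abs_self (G k (p k + m) x - G k (p k) x)
      have h3 := le_abs_self (G k (p k) x)
      have h4 := hTCbound k m
      linarith
    -- convergence of f k x
    have hx7 : Summable (fun k => |f (k+1) x - f k x|) :=
      Summable.of_nonneg_of_le (fun k => abs_nonneg _) hx6 (hψx.add hTCsum)
    have hcauchy : CauchySeq (fun k => f k x) := by
      refine cauchySeq_of_dist_le_of_summable (fun k => |f (k+1) x - f k x|)
        (fun n => ?_) hx7
      rw [Real.dist_eq, abs_sub_comm]
    have hex : ∃ l, Tendsto (fun k => f k x) atTop (nhds l) :=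
      cauchySeq_tendsto_of_complete hcauchy
    have htf : Tendsto (fun k => f k x) atTop (nhds (g x)) := tendsto_nhds_limUnder hex
    refine ⟨hxY, htf, ?_⟩
    -- convergence of F k (s k) x to g x
    have hx9 : ∀ k, |f k x - F k (s k) x| ≤ (SE k).toReal := by
      intro k
      have hFl : Tendsto (fun n => F k n x) atTop (nhds (f k x)) := hFlim k x (hxY k)
      have hFp : Tendsto (fun m => F k (s k + m) x - F k (s k) x) atTop
          (nhds (f k x - F k (s k) x)) :=
        (((hFl.comp (tendsto_add_atTop_nat (s k))).congr
          (fun m => by simp only [Function.comp_apply]; rw [Nat.add_comm])).sub tendsto_const_nhds)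
      refine le_of_tendsto hFp.abs (Eventually.of_forall (fun m => ?_))
      have h1 : |F k (s k + m) x - F k (s k) x|
          ≤ ∑ j ∈ Finset.range m, |F k (s k + j + 1) x - F k (s k + j) x| :=
        abs_telescope (fun i => F k i x) (s k) m
      exact le_trans h1 (hTEbound k m)
    rw [tendsto_iff_dist_tendsto_zero]
    have hTE0 : Tendsto (fun k => (SE k).toReal) atTop (nhds 0) :=
      hTEsum.tendsto_atTop_zero
    have hfd0 : Tendsto (fun k => dist (f k x) (g x)) atTop (nhds 0) :=
      tendsto_iff_dist_tendsto_zero.1 htf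
    refine squeeze_zero (fun k => dist_nonneg) (fun k => ?_)
      (by simpa using hTE0.add hfd0)
    calc dist (F k (s k) x) (g x) ≤ dist (F k (s k) x) (f k x) + dist (f k x) (g x) :=
        dist_triangle _ _ _
      _ ≤ (SE k).toReal + dist (f k x) (g x) := by
          have : dist (F k (s k) x) (f k x) = |f k x - F k (s k) x| := by
            rw [Real.dist_eq, abs_sub_comm]
          rw [this]
          exact add_le_add_left (hx9 k) _
  -- final assembly
  refine ⟨Omega H, g, L, ⟨H, hHreg, subset_rfl⟩, ?_, fun x hx => (hxall x hx).2.1, ?_, hL⟩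
  · exact fun x hx => mem_iInter.2 (fun k => hYD k ((hxall x hx).1 k))
  · -- SummableWithIntegral (Omega H) g L
    refine ⟨Omega H, fun n => F (n+2) (s (n+2)), ⟨H, hHreg, subset_rfl⟩, subset_rfl,
      fun n => hFc _ _, ?_, ?_, ?_⟩
    · -- L¹ bound for the diagonal sequence
      intro n
      have hsa : s (n+2) = 8*n+26 := by simp only [hs]; omega
      have hsa1 : s (n+3) = 8*n+34 := by simp only [hs]; omega
      have hev : ∀ᶠ N in atTop,
          (∫ x in (0:ℝ)..1, |F (n+3) N x - F (n+2) N x|) < 2*(1/2:ℝ)^(n+2) := by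
        refine (hFGd (n+2)).eventually_lt_const ?_
        nlinarith [hJ (n+2), pow_pos (by norm_num : (0:ℝ) < 1/2) (n+2)]
      obtain ⟨N, hN⟩ := (((eventually_ge_atTop (s (n+2))).and
        (eventually_ge_atTop (s (n+3)))).and hev).exists
      obtain ⟨⟨hNa, hNa1⟩, hNlt⟩ := hN
      have hiA : IntervalIntegrable
          (fun x => |F (n+3) (s (n+3)) x - F (n+3) N x|) volume 0 1 :=
        intInt (((hFc _ _).sub (hFc _ _)).abs)
      have hiB : IntervalIntegrable (fun x => |F (n+3) N x - F (n+2) N x|) volume 0 1 :=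
        intInt (((hFc _ _).sub (hFc _ _)).abs)
      have hiC : IntervalIntegrable
          (fun x => |F (n+2) N x - F (n+2) (s (n+2)) x|) volume 0 1 :=
        intInt (((hFc _ _).sub (hFc _ _)).abs)
      have hi0 : IntervalIntegrable
          (fun x => |F (n+2+1) (s (n+2+1)) x - F (n+2) (s (n+2)) x|) volume 0 1 :=
        intInt (((hFc _ _).sub (hFc _ _)).abs)
      have hpt : ∀ x ∈ Icc (0:ℝ) 1,
          |F (n+2+1) (s (n+2+1)) x - F (n+2) (s (n+2)) x|
            ≤ |F (n+3) (s (n+3)) x - F (n+3) N x| + |F (n+3) N x - F (n+2) N x|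
              + |F (n+2) N x - F (n+2) (s (n+2)) x| := by
        intro x _
        have e1 : F (n+2+1) (s (n+2+1)) x - F (n+2) (s (n+2)) x
            = (F (n+3) (s (n+3)) x - F (n+3) N x) + (F (n+3) N x - F (n+2) N x)
              + (F (n+2) N x - F (n+2) (s (n+2)) x) := by
          have : n+2+1 = n+3 := by omega
          rw [this]; ring
        rw [e1]
        calc |_ + _ + _| ≤ |(F (n+3) (s (n+3)) x - F (n+3) N x)
              + (F (n+3) N x - F (n+2) N x)| + |F (n+2) N x - F (n+2) (s (n+2)) x| :=
            abs_add_le _ _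
          _ ≤ |F (n+3) (s (n+3)) x - F (n+3) N x| + |F (n+3) N x - F (n+2) N x|
              + |F (n+2) N x - F (n+2) (s (n+2)) x| := by
            have := abs_add_le (F (n+3) (s (n+3)) x - F (n+3) N x) (F (n+3) N x - F (n+2) N x)
            linarith
      have hsplit : (∫ x in (0:ℝ)..1, |F (n+2+1) (s (n+2+1)) x - F (n+2) (s (n+2)) x|)
          ≤ (∫ x in (0:ℝ)..1, |F (n+3) (s (n+3)) x - F (n+3) N x|)
            + (∫ x in (0:ℝ)..1, |F (n+3) N x - F (n+2) N x|)
            + (∫ x in (0:ℝ)..1, |F (n+2) N x - F (n+2) (s (n+2)) x|) := by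
        calc (∫ x in (0:ℝ)..1, |F (n+2+1) (s (n+2+1)) x - F (n+2) (s (n+2)) x|)
            ≤ ∫ x in (0:ℝ)..1, (|F (n+3) (s (n+3)) x - F (n+3) N x|
              + |F (n+3) N x - F (n+2) N x| + |F (n+2) N x - F (n+2) (s (n+2)) x|) :=
            itg_mono hi0 ((hiA.add hiB).add hiC) hpt
          _ = _ := by
            rw [intervalIntegral.integral_add (hiA.add hiB) hiC,
              intervalIntegral.integral_add hiA hiB]
      have hb1 : (∫ x in (0:ℝ)..1, |F (n+3) (s (n+3)) x - F (n+3) N x|)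
          ≤ 2*(1/2:ℝ)^(s (n+3)) := by
        have hcomm : (fun x => |F (n+3) (s (n+3)) x - F (n+3) N x|)
            = (fun x => |F (n+3) N x - F (n+3) (s (n+3)) x|) :=
          funext (fun x => abs_sub_comm _ _)
        calc (∫ x in (0:ℝ)..1, |F (n+3) (s (n+3)) x - F (n+3) N x|)
            = ∫ x in (0:ℝ)..1, |F (n+3) N x - F (n+3) (s (n+3)) x| := by rw [hcomm]
          _ ≤ 2*(1/2:ℝ)^(s (n+3)) := itg_abs_sub_le (F (n+3)) (hFc (n+3)) (hFd (n+3)) _ _ hNa1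
      have hb3 : (∫ x in (0:ℝ)..1, |F (n+2) N x - F (n+2) (s (n+2)) x|)
          ≤ 2*(1/2:ℝ)^(s (n+2)) :=
        itg_abs_sub_le (F (n+2)) (hFc (n+2)) (hFd (n+2)) _ _ hNa
      -- numerics
      have hnum1 : (2:ℝ)*(1/2:ℝ)^(s (n+3)) ≤ (1/2:ℝ)^(n+2) := by
        rw [hsa1]
        have h1 : (1/2:ℝ)^(8*n+34) ≤ (1/2:ℝ)^(n+3) :=
          pow_le_pow_of_le_one (by norm_num) (by norm_num) (by omega)
        have h2 : (2:ℝ)*(1/2:ℝ)^(n+3) = (1/2:ℝ)^(n+2) := by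
          rw [pow_succ]; ring
        linarith
      have hnum3 : (2:ℝ)*(1/2:ℝ)^(s (n+2)) ≤ (1/2:ℝ)^(n+2) := by
        rw [hsa]
        have h1 : (1/2:ℝ)^(8*n+26) ≤ (1/2:ℝ)^(n+3) :=
          pow_le_pow_of_le_one (by norm_num) (by norm_num) (by omega)
        have h2 : (2:ℝ)*(1/2:ℝ)^(n+3) = (1/2:ℝ)^(n+2) := by
          rw [pow_succ]; ring
        linarith
      have hfin : (1/2:ℝ)^(n+2) + 2*(1/2:ℝ)^(n+2) + (1/2:ℝ)^(n+2) = (1/2:ℝ)^n := by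
        have : (1/2:ℝ)^(n+2) = (1/2:ℝ)^n * (1/4) := by
          rw [pow_add]; norm_num
        rw [this]; ring
      calc (∫ x in (0:ℝ)..1, |F (n+2+1) (s (n+2+1)) x - F (n+2) (s (n+2)) x|)
          ≤ _ + _ + _ := hsplit
        _ < (1/2:ℝ)^(n+2) + 2*(1/2:ℝ)^(n+2) + (1/2:ℝ)^(n+2) := by
            have := lt_of_le_of_lt (le_refl (∫ x in (0:ℝ)..1, |F (n+3) N x - F (n+2) N x|)) hNlt
            linarith [hb1, hb3, hnum1, hnum3]
        _ = (1/2:ℝ)^n := hfin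
    · intro x hx
      exact ((hxall x hx).2.2).comp (tendsto_add_atTop_nat 2)
    · -- integrals converge to L
      have herr : ∀ a, |(∫ x in (0:ℝ)..1, F a (s a) x) - I a| ≤ 2*(1/2:ℝ)^(s a) := by
        intro a
        have h1 : Tendsto
            (fun N => |(∫ x in (0:ℝ)..1, F a (s a) x) - ∫ x in (0:ℝ)..1, F a N x|)
            atTop (nhds (|(∫ x in (0:ℝ)..1, F a (s a) x) - I a|)) :=
          (tendsto_const_nhds.sub (hFint a)).abs
        refine le_of_tendsto h1 ?_
        filter_upwards [eventually_ge_atTop (s a)] with N hN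
        have he : (∫ x in (0:ℝ)..1, F a (s a) x) - (∫ x in (0:ℝ)..1, F a N x)
            = ∫ x in (0:ℝ)..1, (F a (s a) x - F a N x) :=
          (intervalIntegral.integral_sub (intInt (hFc a (s a))) (intInt (hFc a N))).symm
        rw [he]
        refine le_trans (intervalIntegral.abs_integral_le_integral_abs (by norm_num)) ?_
        have hcomm : (fun x => |F a (s a) x - F a N x|) = (fun x => |F a N x - F a (s a) x|) :=
          funext (fun x => abs_sub_comm _ _)
        calc (∫ x in (0:ℝ)..1, |F a (s a) x - F a N x|)
            = ∫ x in (0:ℝ)..1, |F a N x - F a (s a) x| := by rw [hcomm]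
          _ ≤ 2*(1/2:ℝ)^(s a) := itg_abs_sub_le (F a) (hFc a) (hFd a) (s a) N hN
      rw [tendsto_iff_dist_tendsto_zero]
      have h2 : Tendsto (fun n => I (n+2)) atTop (nhds L) := hL.comp (tendsto_add_atTop_nat 2)
      have h3 : Tendsto (fun n : ℕ => 2*(1/2:ℝ)^(s (n+2)) + dist (I (n+2)) L)
          atTop (nhds 0) := by
        have h4 : Tendsto (fun n : ℕ => 2*(1/2:ℝ)^(s (n+2))) atTop (nhds 0) := by
          refine squeeze_zero (g := fun n : ℕ => 2*(1/2:ℝ)^n)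
            (fun n => by positivity) (fun n => ?_) ?_
          · have h5 : (1/2:ℝ)^(s (n+2)) ≤ (1/2:ℝ)^n :=
              pow_le_pow_of_le_one (by norm_num) (by norm_num) (by simp only [hs]; omega)
            linarith
          · have h6 := tendsto_pow_atTop_nhds_zero_of_lt_one
              (by norm_num : (0:ℝ) ≤ 1/2) (by norm_num : (1/2:ℝ) < 1)
            simpa using h6.const_mul 2
        have h5 := tendsto_iff_dist_tendsto_zero.1 h2
        simpa using h4.add h5
      refine squeeze_zero (fun n => dist_nonneg) (fun n => ?_) h3
      calc dist (∫ x in (0:ℝ)..1, F (n+2) (s (n+2)) x) L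
          ≤ dist (∫ x in (0:ℝ)..1, F (n+2) (s (n+2)) x) (I (n+2)) + dist (I (n+2)) L :=
          dist_triangle _ _ _
        _ ≤ 2*(1/2:ℝ)^(s (n+2)) + dist (I (n+2)) L := by
            refine add_le_add_left ?_ _
            rw [Real.dist_eq]
            exact herr (n+2)
end
end

section
/- Let D ⊆ [0,1] and let f : D → ℝ satisfy f(x) ≥ 0 for all x ∈ D. If f is summable with integral 0, then f vanishes almost everywhere in the following sense: the set {x ∈ D : f(x) = 0} is almost full. -/
open MeasureTheory Filter Set

noncomputable section

namespace Stmt12Aux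


/-- The measure we work with. -/
def μ01 : Measure ℝ := volume.restrict (Set.Ioc (0:ℝ) 1)

lemma integ_of_contOn {G : ℝ → ℝ} (hG : ContinuousOn G (Set.Icc 0 1)) :
    Integrable G μ01 :=
  (hG.integrableOn_Icc).mono_set Set.Ioc_subset_Icc_self

lemma aesm_of_contOn {G : ℝ → ℝ} (hG : ContinuousOn G (Set.Icc 0 1)) :
    AEStronglyMeasurable G μ01 :=
  ((hG.mono Set.Ioc_subset_Icc_self).aestronglyMeasurable measurableSet_Ioc)

lemma set_int_eq (G : ℝ → ℝ) :
    (∫ x in (0:ℝ)..1, G x) = ∫ x, G x ∂μ01 :=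
  intervalIntegral.integral_of_le (by norm_num)

lemma lint_eq {G : ℝ → ℝ} (hG : ContinuousOn G (Set.Icc 0 1))
    (hnn : ∀ x ∈ Set.Icc (0:ℝ) 1, 0 ≤ G x) :
    (∫⁻ x, ENNReal.ofReal (G x) ∂μ01) = ENNReal.ofReal (∫ x in (0:ℝ)..1, G x) := by
  rw [set_int_eq]
  refine (ofReal_integral_eq_lintegral_ofReal (integ_of_contOn hG) ?_).symm
  exact (ae_restrict_mem measurableSet_Ioc).mono
    fun x hx => hnn x (Set.Ioc_subset_Icc_self hx)

lemma ae_summable_aux {g : ℕ → ℝ → ℝ}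
    (hcont : ∀ n, ContinuousOn (g n) (Set.Icc 0 1))
    (hnn : ∀ n, ∀ x ∈ Set.Icc (0:ℝ) 1, 0 ≤ g n x)
    (hint : ∀ n, (∫ x in (0:ℝ)..1, g n x) ≤ (1/2:ℝ)^n) :
    ∀ᵐ x ∂μ01, Summable (fun n => g n x) := by
  have hm : ∀ n, AEMeasurable (fun x => ENNReal.ofReal (g n x)) μ01 := fun n =>
    ENNReal.measurable_ofReal.comp_aemeasurable (aesm_of_contOn (hcont n)).aemeasurable
  have key : (∫⁻ x, ∑' n, ENNReal.ofReal (g n x) ∂μ01)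
      = ∑' n, ∫⁻ x, ENNReal.ofReal (g n x) ∂μ01 := lintegral_tsum hm
  have hb : (∑' n, ∫⁻ x, ENNReal.ofReal (g n x) ∂μ01) ≤ ENNReal.ofReal 2 := by
    calc (∑' n, ∫⁻ x, ENNReal.ofReal (g n x) ∂μ01)
        ≤ ∑' n : ℕ, ENNReal.ofReal ((1/2:ℝ)^n) := by
          refine ENNReal.tsum_le_tsum fun n => ?_
          rw [lint_eq (hcont n) (hnn n)]
          exact ENNReal.ofReal_le_ofReal (hint n)
      _ = ENNReal.ofReal 2 := by
          rw [← ENNReal.ofReal_tsum_of_nonneg (fun n => by positivity)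
            (summable_geometric_two), tsum_geometric_two]
  have hfin : (∫⁻ x, ∑' n, ENNReal.ofReal (g n x) ∂μ01) ≠ ⊤ := by
    rw [key]; exact (lt_of_le_of_lt hb (by simp)).ne
  have hae := ae_lt_top' (AEMeasurable.ennreal_tsum hm) hfin
  filter_upwards [hae, ae_restrict_mem measurableSet_Ioc] with x hx hxI
  have hxI' : x ∈ Set.Icc (0:ℝ) 1 := Set.Ioc_subset_Icc_self hxI
  have hrw : (∑' n, ENNReal.ofReal (g n x)) = ∑' n, (‖g n x‖₊ : ENNReal) := by
    refine tsum_congr fun n => ?_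
    have := ofReal_norm (g n x); rw [Real.norm_of_nonneg (hnn n x hxI')] at this; exact this
  rw [hrw] at hx
  have := ENNReal.tsum_coe_ne_top_iff_summable.mp hx.ne
  exact Summable.of_nnnorm this

end Stmt12Aux

open Stmt12Aux

set_option maxHeartbeats 1000000

/-- A nonnegative summable function with integral `0` vanishes almost everywhere: its
zero set is almost full. -/
theorem stmt12 (D : Set ℝ) (hD : D ⊆ Set.Icc 0 1) (f : ℝ → ℝ)
    (hpos : ∀ x ∈ D, 0 ≤ f x)
    (hf : SummableWithIntegral D f 0) :
    AlmostFull {x ∈ D | f x = 0} := by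
  classical
  obtain ⟨Y, F, ⟨h, hreg, hΩY⟩, hYD, hFcont, hFdiff, hFlim, hFint⟩ := hf
  set d : ℕ → ℝ → ℝ := fun k x => F (k+1) x - F k x with hd
  have hsum_h : ∀ᵐ x ∂μ01, Summable (fun n => h n x) :=
    Stmt12Aux.ae_summable_aux (fun n => (hreg n).1) (fun n => (hreg n).2.1)
      (fun n => (hreg n).2.2.le)
  have hdcont : ∀ k, ContinuousOn (fun x => |d k x|) (Set.Icc 0 1) :=
    fun k => ((hFcont (k+1)).sub (hFcont k)).abs
  have hsum_d : ∀ᵐ x ∂μ01, Summable (fun k => |d k x|) :=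
    Stmt12Aux.ae_summable_aux hdcont (fun k x _ => abs_nonneg _)
      (fun k => (hFdiff k).le)
  have hY : ∀ᵐ x ∂μ01, x ∈ Y := by
    filter_upwards [hsum_h, ae_restrict_mem measurableSet_Ioc] with x hs hxI
    refine hΩY ⟨Set.Ioc_subset_Icc_self hxI, ∑' n, h n x, fun m => ?_⟩
    exact Summable.sum_le_tsum (Finset.range (m+1))
      (fun i _ => (hreg i).2.1 x (Set.Ioc_subset_Icc_self hxI)) hs
  set g : ℝ → ℝ := fun x => F 0 x + ∑' k, d k x with hg
  have htend : ∀ᵐ x ∂μ01, Tendsto (fun n => F n x) atTop (nhds (g x)) := by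
    filter_upwards [hsum_d] with x hx
    have hx' : Summable (fun k => d k x) := hx.of_abs
    have h1 := hx'.hasSum.tendsto_sum_nat
    have h2 : Tendsto (fun n => F 0 x + ∑ k ∈ Finset.range n, d k x) atTop
        (nhds (g x)) := tendsto_const_nhds.add h1
    refine h2.congr fun n => ?_
    rw [Finset.sum_range_sub (fun k => F k x)]
    ring
  have hdm : ∀ k, AEMeasurable (fun x => ENNReal.ofReal |d k x|) μ01 := fun k =>
    ENNReal.measurable_ofReal.comp_aemeasurable
      (Stmt12Aux.aesm_of_contOn (hdcont k)).aemeasurable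
  have hA : ∀ n, (∫⁻ x, ENNReal.ofReal ‖F n x - g x‖ ∂μ01)
      ≤ ENNReal.ofReal (2 * (1/2:ℝ)^n) := by
    intro n
    have step1 : ∀ᵐ x ∂μ01,
        ENNReal.ofReal ‖F n x - g x‖ ≤ ∑' i, ENNReal.ofReal |d (i+n) x| := by
      filter_upwards [hsum_d] with x hx
      have hx' : Summable (fun k => d k x) := hx.of_abs
      have htail : Summable (fun i => |d (i+n) x|) := (summable_nat_add_iff n).mpr hx
      have he : g x - F n x = ∑' i, d (i+n) x := by
        have h3 := Summable.sum_add_tsum_nat_add (f := fun k => d k x) n hx'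
        have hFn : (∑ i ∈ Finset.range n, d i x) = F n x - F 0 x :=
          Finset.sum_range_sub (fun k => F k x) n
        rw [hFn] at h3
        simp only [hg]
        linarith
      calc ENNReal.ofReal ‖F n x - g x‖
          ≤ ENNReal.ofReal (∑' i, |d (i+n) x|) := by
            refine ENNReal.ofReal_le_ofReal ?_
            rw [norm_sub_rev, he]
            have := norm_tsum_le_tsum_norm (f := fun i => d (i+n) x)
              (by simpa [Real.norm_eq_abs] using htail)
            simpa [Real.norm_eq_abs] using this
        _ = ∑' i, ENNReal.ofReal |d (i+n) x| :=
            ENNReal.ofReal_tsum_of_nonneg (fun i => abs_nonneg _) htail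
    have hsumpow : Summable (fun i : ℕ => ((1:ℝ)/2)^(i+n)) := by
      simpa [pow_add] using summable_geometric_two.mul_right (((1:ℝ)/2)^n)
    calc (∫⁻ x, ENNReal.ofReal ‖F n x - g x‖ ∂μ01)
        ≤ ∫⁻ x, ∑' i, ENNReal.ofReal |d (i+n) x| ∂μ01 := lintegral_mono_ae step1
      _ = ∑' i, ∫⁻ x, ENNReal.ofReal |d (i+n) x| ∂μ01 :=
          lintegral_tsum (fun i => hdm (i+n))
      _ ≤ ∑' i, ENNReal.ofReal (((1:ℝ)/2)^(i+n)) := by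
          refine ENNReal.tsum_le_tsum fun i => ?_
          rw [Stmt12Aux.lint_eq (hdcont (i+n)) (fun x _ => abs_nonneg _)]
          exact ENNReal.ofReal_le_ofReal (hFdiff (i+n)).le
      _ = ENNReal.ofReal (2 * (1/2:ℝ)^n) := by
          rw [← ENNReal.ofReal_tsum_of_nonneg (fun i => by positivity) hsumpow]
          congr 1
          have h4 : ∀ i : ℕ, ((1:ℝ)/2)^(i+n) = (1/2)^i * (1/2)^n := fun i => pow_add _ _ _
          rw [tsum_congr h4, tsum_mul_right, tsum_geometric_two]
  have hgaesm : AEStronglyMeasurable g μ01 :=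
    aestronglyMeasurable_of_tendsto_ae atTop
      (fun n => Stmt12Aux.aesm_of_contOn (hFcont n)) htend
  have hgF0 : Integrable (fun x => g x - F 0 x) μ01 := by
    refine ⟨hgaesm.sub (Stmt12Aux.aesm_of_contOn (hFcont 0)), ?_⟩
    rw [hasFiniteIntegral_iff_norm]
    calc (∫⁻ x, ENNReal.ofReal ‖g x - F 0 x‖ ∂μ01)
        = ∫⁻ x, ENNReal.ofReal ‖F 0 x - g x‖ ∂μ01 := by simp_rw [norm_sub_rev]
      _ ≤ ENNReal.ofReal (2 * (1/2:ℝ)^0) := hA 0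
      _ < ⊤ := ENNReal.ofReal_lt_top
  have hgint : Integrable g μ01 := by
    have h10 : Integrable (fun x => F 0 x + (g x - F 0 x)) μ01 :=
      (Stmt12Aux.integ_of_contOn (hFcont 0)).add hgF0
    have h11 : (fun x => F 0 x + (g x - F 0 x)) = g := by funext x; ring
    rwa [h11] at h10
  have hIconv : Tendsto (fun n => ∫ x, F n x ∂μ01) atTop (nhds (∫ x, g x ∂μ01)) := by
    rw [tendsto_iff_norm_sub_tendsto_zero]
    have hb : ∀ n, ‖(∫ x, F n x ∂μ01) - ∫ x, g x ∂μ01‖ ≤ 2*(1/2:ℝ)^n := by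
      intro n
      rw [← integral_sub (Stmt12Aux.integ_of_contOn (hFcont n)) hgint]
      calc ‖∫ x, (F n x - g x) ∂μ01‖
          ≤ (∫⁻ x, ENNReal.ofReal ‖F n x - g x‖ ∂μ01).toReal :=
            norm_integral_le_lintegral_norm _
        _ ≤ 2*(1/2:ℝ)^n := ENNReal.toReal_le_of_le_ofReal (by positivity) (hA n)
    refine squeeze_zero (fun n => norm_nonneg _) hb ?_
    have h5 : Tendsto (fun n : ℕ => (2:ℝ)*(1/2)^n) atTop (nhds (2*0)) :=
      tendsto_const_nhds.mul
        (tendsto_pow_atTop_nhds_zero_of_lt_one (by norm_num) (by norm_num))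
    simpa only [mul_zero] using h5
  have hIg : (∫ x, g x ∂μ01) = 0 := by
    have h0 : Tendsto (fun n => ∫ x, F n x ∂μ01) atTop (nhds 0) := by
      have h6 := hFint
      simp_rw [Stmt12Aux.set_int_eq] at h6
      exact h6
    exact tendsto_nhds_unique hIconv h0
  have hgnn : 0 ≤ᵐ[μ01] g := by
    filter_upwards [htend, hY] with x ht hy
    have h7 : f x = g x := tendsto_nhds_unique (hFlim x hy) ht
    rw [← h7]; exact hpos x (hYD hy)
  have hg0 : g =ᵐ[μ01] 0 := (integral_eq_zero_iff_of_nonneg_ae hgnn hgint).mp hIg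
  have hmax : ∀ n, (∫ x in (0:ℝ)..1, max (F n x) 0) ≤ 2*(1/2:ℝ)^n := by
    intro n
    rw [Stmt12Aux.set_int_eq]
    have hint : Integrable (fun x => max (F n x) 0) μ01 :=
      Stmt12Aux.integ_of_contOn ((hFcont n).sup continuousOn_const)
    rw [integral_eq_lintegral_of_nonneg_ae (f := fun x => max (F n x) 0)
      (Eventually.of_forall fun x => le_max_right _ _) hint.1]
    refine ENNReal.toReal_le_of_le_ofReal (by positivity) ?_
    calc (∫⁻ x, ENNReal.ofReal (max (F n x) 0) ∂μ01)
        ≤ ∫⁻ x, ENNReal.ofReal ‖F n x - g x‖ ∂μ01 := by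
          refine lintegral_mono_ae ?_
          filter_upwards [hg0] with x hx
          refine ENNReal.ofReal_le_ofReal ?_
          simp only [Pi.zero_apply] at hx
          rw [hx, sub_zero, Real.norm_eq_abs]
          exact max_le (le_abs_self _) (abs_nonneg _)
      _ ≤ _ := hA n
  have hsel : ∀ n : ℕ, ∃ m : ℕ, n ≤ m ∧
      (∫ x in (0:ℝ)..1, max (F m x) 0) < (1/2:ℝ)^n - ∫ x in (0:ℝ)..1, h n x := by
    intro n
    have hδ : 0 < (1/2:ℝ)^n - ∫ x in (0:ℝ)..1, h n x := sub_pos.mpr (hreg n).2.2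
    have ht : Tendsto (fun m : ℕ => (2:ℝ)*(1/2)^m) atTop (nhds 0) := by
      have h5 : Tendsto (fun m : ℕ => (2:ℝ)*(1/2)^m) atTop (nhds (2*0)) :=
        tendsto_const_nhds.mul
          (tendsto_pow_atTop_nhds_zero_of_lt_one (by norm_num) (by norm_num))
      simpa only [mul_zero] using h5
    obtain ⟨m, hm1, hm2⟩ :=
      ((ht.eventually (gt_mem_nhds hδ)).and (eventually_ge_atTop n)).exists
    exact ⟨m, hm2, lt_of_le_of_lt (hmax m) hm1⟩
  choose φ hφge hφlt using hsel
  refine ⟨fun n x => h n x + max (F (φ n) x) 0, fun n => ?_, ?_⟩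
  · refine ⟨(hreg n).1.add ((hFcont (φ n)).sup continuousOn_const),
      fun x hx => add_nonneg ((hreg n).2.1 x hx) (le_max_right _ _), ?_⟩
    have hi1 : IntervalIntegrable (h n) volume 0 1 := by
      apply ContinuousOn.intervalIntegrable
      rw [Set.uIcc_of_le (by norm_num : (0:ℝ) ≤ 1)]
      exact (hreg n).1
    have hi2 : IntervalIntegrable (fun x => max (F (φ n) x) 0) volume 0 1 := by
      apply ContinuousOn.intervalIntegrable
      rw [Set.uIcc_of_le (by norm_num : (0:ℝ) ≤ 1)]
      exact (hFcont (φ n)).sup continuousOn_const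
    rw [intervalIntegral.integral_add hi1 hi2]
    have := hφlt n
    linarith
  · rintro x ⟨hxI, γ, hγ⟩
    have hHnn : ∀ i : ℕ, 0 ≤ h i x ∧ 0 ≤ max (F (φ i) x) 0 :=
      fun i => ⟨(hreg i).2.1 x hxI, le_max_right _ _⟩
    have hγ0 : (0:ℝ) ≤ γ := by
      have h8 : h 0 x + max (F (φ 0) x) 0 ≤ γ := by simpa using hγ 0
      exact le_trans (add_nonneg (hHnn 0).1 (hHnn 0).2) h8
    have hxY : x ∈ Y := hΩY ⟨hxI, γ, fun m =>
      le_trans (Finset.sum_le_sum fun i _ => le_add_of_nonneg_right (hHnn i).2) (hγ m)⟩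
    have hsumM : Summable (fun i => max (F (φ i) x) 0) := by
      refine summable_of_sum_range_le (c := γ) (fun i => (hHnn i).2) fun m => ?_
      cases m with
      | zero => simpa using hγ0
      | succ m =>
        exact le_trans
          (Finset.sum_le_sum fun i _ => le_add_of_nonneg_left (hHnn i).1) (hγ m)
    have h0 : Tendsto (fun i => max (F (φ i) x) 0) atTop (nhds 0) :=
      hsumM.tendsto_atTop_zero
    have hφtop : Tendsto φ atTop atTop := tendsto_atTop_mono hφge tendsto_id
    have h1 : Tendsto (fun i => max (F (φ i) x) 0) atTop (nhds (max (f x) 0)) :=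
      ((hFlim x hxY).comp hφtop).max tendsto_const_nhds
    have h9 : max (f x) 0 = 0 := tendsto_nhds_unique h1 h0
    have hle : f x ≤ 0 := by rw [← h9]; exact le_max_left _ _
    exact ⟨hYD hxY, le_antisymm hle (hpos x (hYD hxY))⟩
end
end

section
/- If X ⊆ [0,1] is summably measurable with measure μ and μ ≠ 0, then X contains at least one point. -/
open MeasureTheory Filter Set

noncomputable section

/-- `X ⊆ [0,1]` is *summably measurable with measure `μ`* if its indicator function is
summable with integral `μ`. -/
def SummablyMeasurable (X : Set ℝ) (μ : ℝ) : Prop :=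
  SummableWithIntegral (Set.Icc 0 1) (X.indicator fun _ => (1:ℝ)) μ

open scoped ENNReal NNReal

/-- Every summably measurable subset of `[0,1]` with nonzero measure contains a point. -/
theorem stmt13 (X : Set ℝ) (hX : X ⊆ Set.Icc 0 1) (μ : ℝ)
    (hmeas : SummablyMeasurable X μ) (hμ : μ ≠ 0) :
    X.Nonempty := by
  by_contra hne
  rw [Set.not_nonempty_iff_eq_empty] at hne
  subst hne
  obtain ⟨Y, F, ⟨h, hreg, hΩY⟩, hYD, hFcont, hFdiff, hFlim, hFint⟩ := hmeas
  set ν : Measure ℝ := volume.restrict (Set.Ioc 0 1) with hνdef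
  have hae_mem : ∀ᵐ x ∂ν, x ∈ Set.Ioc (0:ℝ) 1 := ae_restrict_mem measurableSet_Ioc
  have hmeasF : ∀ n, AEStronglyMeasurable (F n) ν := fun n =>
    ((hFcont n).mono Set.Ioc_subset_Icc_self).aestronglyMeasurable measurableSet_Ioc
  have hintF : ∀ n, Integrable (F n) ν := fun n =>
    ((hFcont n).integrableOn_Icc).mono_set Set.Ioc_subset_Icc_self
  -- half powers in ℝ≥0∞
  have hhalf : ∀ k : ℕ, ENNReal.ofReal ((1/2:ℝ)^k) = (2⁻¹ : ℝ≥0∞)^k := by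
    intro k
    rw [ENNReal.ofReal_pow (by norm_num : (0:ℝ) ≤ 1/2)]
    congr 1
    rw [one_div, ENNReal.ofReal_inv_of_pos (by norm_num : (0:ℝ) < 2)]
    norm_num
  have htsum_half : ∑' k : ℕ, (2⁻¹ : ℝ≥0∞)^k = 2 := by
    rw [ENNReal.tsum_geometric, ENNReal.one_sub_inv_two, inv_inv]
  -- Step C : a.e. x lies in Ω(h), hence in Y, hence F n x → 0
  have hmeash : ∀ n, AEMeasurable (fun x => ENNReal.ofReal (h n x)) ν := fun n =>
    (((hreg n).1.mono Set.Ioc_subset_Icc_self).aemeasurable measurableSet_Ioc).ennreal_ofReal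
  have hlint_h : ∀ n, ∫⁻ x, ENNReal.ofReal (h n x) ∂ν ≤ (2⁻¹ : ℝ≥0∞)^n := by
    intro n
    have hint : Integrable (h n) ν :=
      ((hreg n).1.integrableOn_Icc).mono_set Set.Ioc_subset_Icc_self
    have hnn : 0 ≤ᵐ[ν] h n := by
      filter_upwards [hae_mem] with x hx
      exact (hreg n).2.1 x (Set.Ioc_subset_Icc_self hx)
    rw [← ofReal_integral_eq_lintegral_ofReal hint hnn, ← hhalf n]
    apply ENNReal.ofReal_le_ofReal
    have := (hreg n).2.2
    rw [intervalIntegral.integral_of_le (zero_le_one)] at this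
    exact this.le
  have hfin : ∀ᵐ x ∂ν, ∑' n, ENNReal.ofReal (h n x) < ⊤ := by
    refine ae_lt_top' (AEMeasurable.ennreal_tsum hmeash) ?_
    rw [lintegral_tsum hmeash]
    refine ne_of_lt (lt_of_le_of_lt (ENNReal.tsum_le_tsum hlint_h) ?_)
    rw [htsum_half]; norm_num
  have hconv : ∀ᵐ x ∂ν, Tendsto (fun n => F n x) atTop (nhds 0) := by
    filter_upwards [hfin, hae_mem] with x hx hxm
    have hxIcc : x ∈ Set.Icc (0:ℝ) 1 := Set.Ioc_subset_Icc_self hxm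
    have hxΩ : x ∈ Omega h := by
      refine ⟨hxIcc, (∑' n, ENNReal.ofReal (h n x)).toReal, fun m => ?_⟩
      have hnn : ∀ n ∈ Finset.range (m+1), 0 ≤ h n x := fun n _ => (hreg n).2.1 x hxIcc
      have h1 : ENNReal.ofReal (∑ n ∈ Finset.range (m+1), h n x)
          ≤ ∑' n, ENNReal.ofReal (h n x) := by
        rw [ENNReal.ofReal_sum_of_nonneg hnn]
        exact ENNReal.sum_le_tsum _
      have h2 := ENNReal.toReal_mono hx.ne h1
      rwa [ENNReal.toReal_ofReal (Finset.sum_nonneg hnn)] at h2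
    have := hFlim x (hΩY hxΩ)
    simpa using this
  -- lintegral bound on differences
  have hlint_d : ∀ k, ∫⁻ x, (‖F (k+1) x - F k x‖₊ : ℝ≥0∞) ∂ν ≤ (2⁻¹ : ℝ≥0∞)^k := by
    intro k
    have hcontd : ContinuousOn (fun x => |F (k+1) x - F k x|) (Set.Icc 0 1) :=
      ((hFcont (k+1)).sub (hFcont k)).abs
    have hint : Integrable (fun x => |F (k+1) x - F k x|) ν :=
      (hcontd.integrableOn_Icc).mono_set Set.Ioc_subset_Icc_self
    have hnn : 0 ≤ᵐ[ν] fun x => |F (k+1) x - F k x| :=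
      Filter.Eventually.of_forall fun x => abs_nonneg _
    calc ∫⁻ x, (‖F (k+1) x - F k x‖₊ : ℝ≥0∞) ∂ν
        = ∫⁻ x, ENNReal.ofReal (|F (k+1) x - F k x|) ∂ν := by
          simp_rw [← enorm_eq_nnnorm, Real.enorm_eq_ofReal_abs]
      _ = ENNReal.ofReal (∫ x, |F (k+1) x - F k x| ∂ν) :=
          (ofReal_integral_eq_lintegral_ofReal hint hnn).symm
      _ ≤ (2⁻¹ : ℝ≥0∞)^k := by
          rw [← hhalf k]
          apply ENNReal.ofReal_le_ofReal
          have := hFdiff k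
          rw [intervalIntegral.integral_of_le (zero_le_one)] at this
          exact this.le
  have hmeasd : ∀ k, AEMeasurable (fun x => (‖F (k+1) x - F k x‖₊ : ℝ≥0∞)) ν := fun k =>
    ((hmeasF (k+1)).sub (hmeasF k)).enorm
  -- bound on ∫⁻ ‖F n - F m‖ for n ≤ m
  have hboundm : ∀ n m, n ≤ m →
      ∫⁻ x, (‖F n x - F m x‖₊ : ℝ≥0∞) ∂ν ≤ 2⁻¹^n * 2 := by
    intro n m hnm
    have htel : ∀ x, F m x - F n x = ∑ k ∈ Finset.Ico n m, (F (k+1) x - F k x) := by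
      intro x
      rw [Finset.sum_Ico_eq_sub _ hnm, Finset.sum_range_sub (fun i => F i x),
        Finset.sum_range_sub (fun i => F i x)]
      ring
    calc ∫⁻ x, (‖F n x - F m x‖₊ : ℝ≥0∞) ∂ν
        ≤ ∫⁻ x, ∑ k ∈ Finset.Ico n m, (‖F (k+1) x - F k x‖₊ : ℝ≥0∞) ∂ν := by
          apply lintegral_mono
          intro x
          have : ‖F n x - F m x‖₊ ≤ ∑ k ∈ Finset.Ico n m, ‖F (k+1) x - F k x‖₊ := by
            rw [← nnnorm_neg, neg_sub, htel x]
            exact nnnorm_sum_le _ _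
          show ((‖F n x - F m x‖₊ : ℝ≥0∞)) ≤ ∑ k ∈ Finset.Ico n m, ((‖F (k+1) x - F k x‖₊ : ℝ≥0) : ℝ≥0∞)
          rw [← ENNReal.coe_finset_sum]
          exact_mod_cast this
      _ = ∑ k ∈ Finset.Ico n m, ∫⁻ x, (‖F (k+1) x - F k x‖₊ : ℝ≥0∞) ∂ν :=
          lintegral_finset_sum' _ (fun k _ => hmeasd k)
      _ ≤ ∑ k ∈ Finset.Ico n m, (2⁻¹ : ℝ≥0∞)^k :=
          Finset.sum_le_sum fun k _ => hlint_d k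
      _ = ∑ k ∈ Finset.range (m - n), (2⁻¹ : ℝ≥0∞)^(n + k) := by
          rw [Finset.sum_Ico_eq_sum_range]
      _ ≤ ∑' k : ℕ, (2⁻¹ : ℝ≥0∞)^(n + k) := ENNReal.sum_le_tsum _
      _ = 2⁻¹^n * 2 := by
          simp_rw [pow_add]
          rw [ENNReal.tsum_mul_left, htsum_half]
  -- Fatou : ∫⁻ ‖F n‖ ≤ 2⁻¹^n * 2
  have hFn_lint : ∀ n, ∫⁻ x, (‖F n x‖₊ : ℝ≥0∞) ∂ν ≤ 2⁻¹^n * 2 := by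
    intro n
    have h1 : ∀ᵐ x ∂ν, (‖F n x‖₊ : ℝ≥0∞)
        = liminf (fun m => (‖F n x - F m x‖₊ : ℝ≥0∞)) atTop := by
      filter_upwards [hconv] with x hx
      have h2 : Tendsto (fun m => F n x - F m x) atTop (nhds (F n x)) := by
        have := (tendsto_const_nhds (x := F n x)).sub hx
        simpa using this
      have h3 : Tendsto (fun m => (‖F n x - F m x‖₊ : ℝ≥0∞)) atTop
          (nhds (‖F n x‖₊ : ℝ≥0∞)) :=
        (ENNReal.continuous_coe.comp continuous_nnnorm).continuousAt.tendsto.comp h2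
      exact h3.liminf_eq.symm
    calc ∫⁻ x, (‖F n x‖₊ : ℝ≥0∞) ∂ν
        = ∫⁻ x, liminf (fun m => (‖F n x - F m x‖₊ : ℝ≥0∞)) atTop ∂ν :=
          lintegral_congr_ae h1
      _ ≤ liminf (fun m => ∫⁻ x, (‖F n x - F m x‖₊ : ℝ≥0∞) ∂ν) atTop :=
          lintegral_liminf_le' (fun m => ((hmeasF n).sub (hmeasF m)).enorm)
      _ ≤ 2⁻¹^n * 2 := by
          have hev : ∀ᶠ m in atTop,
              (∫⁻ x, (‖F n x - F m x‖₊ : ℝ≥0∞) ∂ν) ≤ 2⁻¹^n * 2 :=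
            Filter.eventually_atTop.2 ⟨n, fun m hm => hboundm n m hm⟩
          calc liminf (fun m => ∫⁻ x, (‖F n x - F m x‖₊ : ℝ≥0∞) ∂ν) atTop
              ≤ liminf (fun _ : ℕ => (2⁻¹:ℝ≥0∞)^n * 2) atTop := liminf_le_liminf hev
            _ = 2⁻¹^n * 2 := liminf_const _
  -- conclude
  have hational : ∀ n, |∫ x in (0:ℝ)..1, F n x| ≤ 2 * (1/2:ℝ)^n := by
    intro n
    rw [intervalIntegral.integral_of_le zero_le_one]
    have hb : ∫⁻ x, ENNReal.ofReal ‖F n x‖ ∂ν ≤ 2⁻¹^n * 2 := by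
      simp_rw [ofReal_norm]
      exact hFn_lint n
    have h1 : ‖∫ x, F n x ∂ν‖ ≤ (∫⁻ x, ENNReal.ofReal ‖F n x‖ ∂ν).toReal :=
      norm_integral_le_lintegral_norm _
    have h2 : (∫⁻ x, ENNReal.ofReal ‖F n x‖ ∂ν).toReal ≤ ((2⁻¹:ℝ≥0∞)^n * 2).toReal :=
      ENNReal.toReal_mono
        (ENNReal.mul_ne_top (ENNReal.pow_ne_top (ENNReal.inv_ne_top.2 (by norm_num)))
          ENNReal.ofNat_ne_top) hb
    have h3 : ((2⁻¹:ℝ≥0∞)^n * 2).toReal = 2 * (1/2:ℝ)^n := by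
      rw [ENNReal.toReal_mul, ENNReal.toReal_pow, ENNReal.toReal_inv]
      norm_num
      ring
    rw [← Real.norm_eq_abs]
    calc ‖∫ x, F n x ∂ν‖ ≤ _ := h1
      _ ≤ _ := h2
      _ = _ := h3
  have h0 : Tendsto (fun n => ∫ x in (0:ℝ)..1, F n x) atTop (nhds 0) := by
    apply squeeze_zero_norm (fun n => by simpa [Real.norm_eq_abs] using hational n)
    have : Tendsto (fun n : ℕ => (2:ℝ) * (1/2)^n) atTop (nhds (2 * 0)) :=
      tendsto_const_nhds.mul
        (tendsto_pow_atTop_nhds_zero_of_lt_one (by norm_num) (by norm_num))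
    simpa using this
  exact hμ (tendsto_nhds_unique hFint h0)
end
end
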